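/- arXiv:2602.23775 — 4 statements merged into one kernel-verified Lean document; each statement's English description precedes it below -/
import Mathlib

section
/- Let ν > 0, π1, π2 ∈ (0, 1), π0 ∈ (−π1·π2, 1) with π• := π0 + π1 + π2 < 1, and let (X1, X2) be a random vector taking values in ℕ × ℕ with all moments finite. Suppose that for every bounded function f : ℕ × ℕ → ℝ both identities hold: E[X1 · f(X1, X2)] − π2 · E[X1 · f(X1, X2 + 1)] = π1 · E[(ν + X1) · f(X1 + 1, X2)] + π0 · E[(ν + X1) · f(X1 + 1, X2 + 1)] and E[X2 · f(X1, X2)] − π1 · E[X2 · f(X1 + 1, X2)] = π2 · E[(ν + X2) · f(X1, X2 + 1)] + π0 · E[(ν + X2) · f(X1 + 1, X2 + 1)]. Then the joint probability generating function of (X1, X2) satisfies E[s^{X1} t^{X2}] = ((1 − π•)/(1 − π1·s − π2·t − π0·s·t))^ν for all s, t with |s|, |t| < 1, i.e., (X1, X2) follows the bivariate negative-binomial distribution BNB(ν; π1, π2, π0). -/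
open scoped NNReal ENNReal

open Set Filter Topology

set_option maxHeartbeats 1000000

section BNBaux

lemma bnb_const_off_zero {h : ℝ → ℝ}
    (hd : ∀ x ∈ Ioo (-1:ℝ) 1, DifferentiableAt ℝ h x)
    (hz : ∀ x ∈ Ioo (-1:ℝ) 1, x ≠ 0 → HasDerivAt h 0 x) :
    ∀ x ∈ Ioo (-1:ℝ) 1, h x = h 0 := by
  have h0m : (0:ℝ) ∈ Ioo (-1:ℝ) 1 := by norm_num
  set f' : ℝ → ℝ := fun x => if x = 0 then deriv h x else 0 with hf'
  have hder : ∀ x ∈ Ioo (-1:ℝ) 1, HasDerivAt h (f' x) x := by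
    intro x hx
    by_cases hx0 : x = 0
    · simp only [hf', if_pos hx0]
      subst hx0
      exact (hd 0 h0m).hasDerivAt
    · simp only [hf', if_neg hx0]
      exact hz x hx hx0
  -- same sign constancy
  have same : ∀ x y : ℝ, x ∈ Ioo (-1:ℝ) 1 → y ∈ Ioo (-1:ℝ) 1 → x < y →
      (∀ z ∈ Ioo x y, z ≠ 0) → h x = h y := by
    intro x y hx hy hxy hnz
    have hsub : Icc x y ⊆ Ioo (-1:ℝ) 1 := fun z hz =>
      ⟨lt_of_lt_of_le hx.1 hz.1, lt_of_le_of_lt hz.2 hy.2⟩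
    have hcont : ContinuousOn h (Icc x y) := fun z hz =>
      ((hd z (hsub hz)).continuousAt).continuousWithinAt
    obtain ⟨c, hc, hceq⟩ := exists_hasDerivAt_eq_slope h f' hxy hcont
      (fun z hz => hder z (hsub (Ioo_subset_Icc_self hz)))
    have : f' c = 0 := by simp [hf', hnz c hc]
    rw [this] at hceq
    have hyx : (0:ℝ) < y - x := sub_pos.mpr hxy
    have : h y - h x = 0 := by
      have := hceq.symm
      rw [div_eq_iff (ne_of_gt hyx)] at this
      simpa using this
    linarith
  intro x hx
  rcases lt_trichotomy x 0 with hlt | heq | hgt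
  · -- x < 0 : h is constant on (x, 0), and limits
    have hconst : ∀ y ∈ Ioo x 0, h y = h x := by
      intro y hy
      refine (same x y hx ⟨lt_trans hx.1 hy.1, lt_trans hy.2 one_pos⟩ hy.1
        (fun z hz => ne_of_lt (lt_trans hz.2 hy.2))).symm
    have hne : (𝓝[Ioo x 0] (0:ℝ)).NeBot := by
      refine mem_closure_iff_nhdsWithin_neBot.mp ?_
      rw [closure_Ioo (ne_of_lt hlt)]
      exact ⟨le_of_lt hlt, le_refl 0⟩
    have t1 : Tendsto h (𝓝[Ioo x 0] (0:ℝ)) (𝓝 (h 0)) :=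
      ((hd 0 h0m).continuousAt).continuousWithinAt.tendsto
    have t2 : Tendsto h (𝓝[Ioo x 0] (0:ℝ)) (𝓝 (h x)) := by
      refine Tendsto.congr' ?_ tendsto_const_nhds
      exact eventually_mem_nhdsWithin.mono fun y hy => (hconst y hy).symm
    exact (tendsto_nhds_unique t2 t1).symm ▸ rfl
  · rw [heq]
  · have hconst : ∀ y ∈ Ioo 0 x, h y = h x := by
      intro y hy
      exact same y x ⟨lt_trans (by norm_num : (-1:ℝ) < 0) hy.1, lt_trans hy.2 hx.2⟩ hx hy.2
        (fun z hz => ne_of_gt (lt_trans hy.1 hz.1))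
    have hne : (𝓝[Ioo 0 x] (0:ℝ)).NeBot := by
      refine mem_closure_iff_nhdsWithin_neBot.mp ?_
      rw [closure_Ioo (ne_of_lt hgt)]
      exact ⟨le_refl 0, le_of_lt hgt⟩
    have t1 : Tendsto h (𝓝[Ioo 0 x] (0:ℝ)) (𝓝 (h 0)) :=
      ((hd 0 h0m).continuousAt).continuousWithinAt.tendsto
    have t2 : Tendsto h (𝓝[Ioo 0 x] (0:ℝ)) (𝓝 (h x)) := by
      refine Tendsto.congr' ?_ tendsto_const_nhds
      exact eventually_mem_nhdsWithin.mono fun y hy => (hconst y hy).symm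
    exact (tendsto_nhds_unique t2 t1).symm ▸ rfl


lemma bnb_posD (π1 π2 π0 : ℝ) (hπ1 : π1 ∈ Set.Ioo (0:ℝ) 1) (hπ2 : π2 ∈ Set.Ioo (0:ℝ) 1)
    (hπ0 : π0 ∈ Set.Ioo (-(π1*π2)) 1) (hb : π0+π1+π2<1) :
    ∀ s t : ℝ, |s| ≤ 1 → |t| ≤ 1 → 0 < 1 - π1*s - π2*t - π0*s*t := by
  intro s t hs ht
  rw [abs_le] at hs ht
  obtain ⟨hs1, hs2⟩ := hs; obtain ⟨ht1, ht2⟩ := ht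
  obtain ⟨ha1, ha2⟩ := hπ1; obtain ⟨hb1, hb2⟩ := hπ2; obtain ⟨hc1, hc2⟩ := hπ0
  have k1 : (0:ℝ) < 1 - π1 - π2 - π0 := by linarith
  have k2 : (0:ℝ) < 1 - π1 + π2 + π0 := by nlinarith
  have k3 : (0:ℝ) < 1 + π1 - π2 + π0 := by nlinarith
  have k4 : (0:ℝ) < 1 + π1 + π2 - π0 := by linarith
  have w11 : (0:ℝ) ≤ (1+s)*(1+t) := mul_nonneg (by linarith) (by linarith)
  have w1m : (0:ℝ) ≤ (1+s)*(1-t) := mul_nonneg (by linarith) (by linarith)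
  have wm1 : (0:ℝ) ≤ (1-s)*(1+t) := mul_nonneg (by linarith) (by linarith)
  have wmm : (0:ℝ) ≤ (1-s)*(1-t) := mul_nonneg (by linarith) (by linarith)
  nlinarith [mul_nonneg w11 k1.le, mul_nonneg w1m k2.le, mul_nonneg wm1 k3.le,
    mul_nonneg wmm k4.le]


lemma bnb_term_bound {w : ℝ} (hw : 0 ≤ w) {u v : ℝ} (hu : |u| ≤ 1) (hv : |v| ≤ 1)
    (a b : ℕ) : ‖w * u^a * v^b‖ ≤ w := by
  have h1 : |u| ^ a ≤ 1 := pow_le_one₀ (abs_nonneg u) hu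
  have h2 : |v| ^ b ≤ 1 := pow_le_one₀ (abs_nonneg v) hv
  have h0 : (0:ℝ) ≤ |u| ^ a := pow_nonneg (abs_nonneg u) _
  have heq : ‖w * u^a * v^b‖ = w * |u|^a * |v|^b := by
    simp [Real.norm_eq_abs, abs_mul, abs_pow, abs_of_nonneg hw]
  rw [heq]
  calc w * |u|^a * |v|^b ≤ w * |u|^a :=
        mul_le_of_le_one_right (mul_nonneg hw h0) h2
    _ ≤ w * 1 := mul_le_mul_of_nonneg_left h1 hw
    _ = w := mul_one _

lemma bnb_summable_weighted {w : ℕ × ℕ → ℝ} (hw : ∀ q, 0 ≤ w q) (hws : Summable w)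
    {u v : ℝ} (hu : |u| ≤ 1) (hv : |v| ≤ 1) :
    Summable fun q : ℕ × ℕ => w q * u^q.1 * v^q.2 :=
  hws.of_norm_bounded fun q => bnb_term_bound (hw q) hu hv q.1 q.2

lemma bnb_const_in_s (ν π1 π2 π0 : ℝ) (hν : 0 < ν)
    (hD : ∀ s t : ℝ, |s| ≤ 1 → |t| ≤ 1 → 0 < 1 - π1*s - π2*t - π0*s*t)
    (c : ℕ × ℕ → ℝ) (hc0 : ∀ q, 0 ≤ c q)
    (h0 : Summable c) (h1 : Summable fun q : ℕ × ℕ => c q * q.1)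
    (t : ℝ) (ht : |t| ≤ 1)
    (hODE : ∀ s : ℝ, |s| ≤ 1 →
      (1 - π1*s - π2*t - π0*s*t) * (∑' q : ℕ × ℕ, c q * q.1 * s^q.1 * t^q.2)
        = ν * (π1 + π0*t) * s * (∑' q : ℕ × ℕ, c q * s^q.1 * t^q.2)) :
    ∀ x ∈ Ioo (-1:ℝ) 1, ∀ y ∈ Ioo (-1:ℝ) 1,
      (∑' q : ℕ × ℕ, c q * x^q.1 * t^q.2) * (1 - π1*x - π2*t - π0*x*t) ^ ν
        = (∑' q : ℕ × ℕ, c q * y^q.1 * t^q.2) * (1 - π1*y - π2*t - π0*y*t) ^ ν := by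
  have habs : ∀ x : ℝ, x ∈ Ioo (-1:ℝ) 1 → |x| ≤ 1 := by
    intro x hx; rw [abs_le]; exact ⟨le_of_lt hx.1, le_of_lt hx.2⟩
  set G : ℝ → ℝ := fun s => ∑' q : ℕ × ℕ, c q * s^q.1 * t^q.2 with hG
  set Dg : ℝ → ℝ := fun s => ∑' q : ℕ × ℕ, c q * ((q.1 : ℝ) * s^(q.1-1)) * t^q.2 with hDg
  set D : ℝ → ℝ := fun s => 1 - π1*s - π2*t - π0*s*t with hDdef
  -- termwise derivative
  have hderivG : ∀ s ∈ Ioo (-1:ℝ) 1, HasDerivAt G (Dg s) s := by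
    intro s hs
    refine hasDerivAt_tsum_of_isPreconnected (u := fun q : ℕ × ℕ => c q * q.1) h1
      isOpen_Ioo (convex_Ioo (-1:ℝ) 1).isPreconnected
      (g := fun q s => c q * s^q.1 * t^q.2)
      (g' := fun q s => c q * ((q.1 : ℝ) * s^(q.1-1)) * t^q.2)
      (fun q y hy => ?_) (fun q y hy => ?_) (y₀ := 0) (by norm_num) ?_ hs
    · exact ((hasDerivAt_pow q.1 y).const_mul (c q)).mul_const (t^q.2)
    · have h1y : |y| ^ (q.1 - 1) ≤ 1 := pow_le_one₀ (abs_nonneg y) (habs y hy)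
      have h2t : |t| ^ q.2 ≤ 1 := pow_le_one₀ (abs_nonneg t) ht
      have hy0 : (0:ℝ) ≤ |y| ^ (q.1-1) := pow_nonneg (abs_nonneg y) _
      have heq : ‖c q * ((q.1 : ℝ) * y^(q.1-1)) * t^q.2‖
          = c q * ((q.1:ℝ) * |y|^(q.1-1)) * |t|^q.2 := by
        simp [Real.norm_eq_abs, abs_mul, abs_pow, abs_of_nonneg (hc0 q), Nat.abs_cast]
      rw [heq]
      calc c q * ((q.1:ℝ) * |y|^(q.1-1)) * |t|^q.2
          ≤ c q * ((q.1:ℝ) * |y|^(q.1-1)) :=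
            mul_le_of_le_one_right
              (mul_nonneg (hc0 q) (mul_nonneg (Nat.cast_nonneg _) hy0)) h2t
        _ = (c q * (q.1:ℝ)) * |y|^(q.1-1) := by ring
        _ ≤ (c q * (q.1:ℝ)) * 1 :=
            mul_le_mul_of_nonneg_left h1y (mul_nonneg (hc0 q) (Nat.cast_nonneg _))
        _ = c q * q.1 := mul_one _
    · refine h0.of_norm_bounded (fun q => ?_)
      have h1y : |(0:ℝ)| ^ q.1 ≤ 1 := pow_le_one₀ (abs_nonneg 0) (by norm_num)
      have h2t : |t| ^ q.2 ≤ 1 := pow_le_one₀ (abs_nonneg t) ht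
      have hy0 : (0:ℝ) ≤ |(0:ℝ)| ^ q.1 := pow_nonneg (abs_nonneg _) _
      have heq : ‖c q * (0:ℝ)^q.1 * t^q.2‖ = c q * |(0:ℝ)|^q.1 * |t|^q.2 := by
        simp [Real.norm_eq_abs, abs_mul, abs_pow, abs_of_nonneg (hc0 q)]
      rw [heq]
      calc c q * |(0:ℝ)|^q.1 * |t|^q.2
          ≤ c q * |(0:ℝ)|^q.1 := mul_le_of_le_one_right (mul_nonneg (hc0 q) hy0) h2t
        _ ≤ c q * 1 := mul_le_mul_of_nonneg_left h1y (hc0 q)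
        _ = c q := mul_one _
  -- A₁ = s * Dg s
  have hA1 : ∀ s : ℝ, (∑' q : ℕ × ℕ, c q * q.1 * s^q.1 * t^q.2) = s * Dg s := by
    intro s
    rw [hDg, ← tsum_mul_left]
    refine tsum_congr fun q => ?_
    obtain ⟨a, b⟩ := q
    cases a with
    | zero => simp
    | succ n =>
      simp only [Nat.add_sub_cancel, pow_succ]
      ring
  -- ODE off zero
  have hODE' : ∀ s ∈ Ioo (-1:ℝ) 1, s ≠ 0 → D s * Dg s = ν * (π1 + π0*t) * G s := by
    intro s hs hs0
    have := hODE s (habs s hs)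
    rw [hA1 s] at this
    have h2 : s * (D s * Dg s) = s * (ν * (π1 + π0*t) * G s) := by
      rw [hDdef, hG]; ring_nf; ring_nf at this; linarith [this]
    exact mul_left_cancel₀ hs0 h2
  -- D positive and derivative
  have hDpos : ∀ s : ℝ, |s| ≤ 1 → 0 < D s := fun s hs => hD s t hs ht
  have hDder : ∀ s : ℝ, HasDerivAt D (-(π1 + π0*t)) s := by
    intro s
    have base : HasDerivAt (fun s : ℝ => (1 - π2*t) + (-(π1+π0*t))*s) (-(π1+π0*t)) s := by
      simpa using ((hasDerivAt_id s).const_mul (-(π1+π0*t))).const_add (1-π2*t)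
    have : (fun s : ℝ => (1 - π2*t) + (-(π1+π0*t))*s) = D := by
      funext u; rw [hDdef]; ring
    rwa [this] at base
  set h : ℝ → ℝ := fun s => G s * (D s) ^ ν with hh
  have hrpow : ∀ s ∈ Ioo (-1:ℝ) 1,
      HasDerivAt (fun u => (D u) ^ ν) (ν * (D s)^(ν-1) * (-(π1+π0*t))) s := by
    intro s hs
    have := (hDder s).rpow_const (p := ν) (Or.inl (hDpos s (habs s hs)).ne')
    convert this using 1
    ring
  have hdiff : ∀ x ∈ Ioo (-1:ℝ) 1, DifferentiableAt ℝ h x := by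
    intro x hx
    exact ((hderivG x hx).differentiableAt).mul ((hrpow x hx).differentiableAt)
  have hzero : ∀ x ∈ Ioo (-1:ℝ) 1, x ≠ 0 → HasDerivAt h 0 x := by
    intro x hx hx0
    have hd := (hderivG x hx).mul (hrpow x hx)
    have hne : D x ≠ 0 := (hDpos x (habs x hx)).ne'
    have e1 : D x ^ (ν - 1) * D x = D x ^ ν := by
      rw [← Real.rpow_add_one hne (ν - 1)]; ring_nf
    have e2 : Dg x * D x ^ ν + G x * (ν * D x ^ (ν-1) * (-(π1+π0*t))) = 0 := by
      have := hODE' x hx hx0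
      linear_combination Dg x * e1.symm + D x ^ (ν-1) * this
    rwa [e2] at hd
  intro x hx y hy
  have ex := bnb_const_off_zero hdiff hzero x hx
  have ey := bnb_const_off_zero hdiff hzero y hy
  show G x * D x ^ ν = G y * D y ^ ν
  rw [show G x * D x ^ ν = h x from rfl, show G y * D y ^ ν = h y from rfl, ex, ey]


lemma bnb_const_in_t (ν π1 π2 π0 : ℝ) (hν : 0 < ν)
    (hD : ∀ s t : ℝ, |s| ≤ 1 → |t| ≤ 1 → 0 < 1 - π1*s - π2*t - π0*s*t)
    (c : ℕ × ℕ → ℝ) (hc0 : ∀ q, 0 ≤ c q)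
    (h0 : Summable c) (h2 : Summable fun q : ℕ × ℕ => c q * q.2)
    (s : ℝ) (hs : |s| ≤ 1)
    (hODE : ∀ t : ℝ, |t| ≤ 1 →
      (1 - π1*s - π2*t - π0*s*t) * (∑' q : ℕ × ℕ, c q * q.2 * s^q.1 * t^q.2)
        = ν * (π2 + π0*s) * t * (∑' q : ℕ × ℕ, c q * s^q.1 * t^q.2)) :
    ∀ x ∈ Ioo (-1:ℝ) 1, ∀ y ∈ Ioo (-1:ℝ) 1,
      (∑' q : ℕ × ℕ, c q * s^q.1 * x^q.2) * (1 - π1*s - π2*x - π0*s*x) ^ ν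
        = (∑' q : ℕ × ℕ, c q * s^q.1 * y^q.2) * (1 - π1*s - π2*y - π0*s*y) ^ ν := by
  have habs : ∀ x : ℝ, x ∈ Ioo (-1:ℝ) 1 → |x| ≤ 1 := by
    intro x hx; rw [abs_le]; exact ⟨le_of_lt hx.1, le_of_lt hx.2⟩
  set G : ℝ → ℝ := fun t => ∑' q : ℕ × ℕ, c q * s^q.1 * t^q.2 with hG
  set Dg : ℝ → ℝ := fun t => ∑' q : ℕ × ℕ, c q * s^q.1 * ((q.2 : ℝ) * t^(q.2-1)) with hDg
  set D : ℝ → ℝ := fun t => 1 - π1*s - π2*t - π0*s*t with hDdef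
  have hderivG : ∀ t ∈ Ioo (-1:ℝ) 1, HasDerivAt G (Dg t) t := by
    intro t htt
    refine hasDerivAt_tsum_of_isPreconnected (u := fun q : ℕ × ℕ => c q * q.2) h2
      isOpen_Ioo (convex_Ioo (-1:ℝ) 1).isPreconnected
      (g := fun q t => c q * s^q.1 * t^q.2)
      (g' := fun q t => c q * s^q.1 * ((q.2 : ℝ) * t^(q.2-1)))
      (fun q y hy => ?_) (fun q y hy => ?_) (y₀ := 0) (by norm_num) ?_ htt
    · exact (hasDerivAt_pow q.2 y).const_mul (c q * s^q.1)
    · have h1y : |y| ^ (q.2 - 1) ≤ 1 := pow_le_one₀ (abs_nonneg y) (habs y hy)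
      have h2s : |s| ^ q.1 ≤ 1 := pow_le_one₀ (abs_nonneg s) hs
      have hy0 : (0:ℝ) ≤ |y| ^ (q.2-1) := pow_nonneg (abs_nonneg y) _
      have hs0 : (0:ℝ) ≤ |s| ^ q.1 := pow_nonneg (abs_nonneg s) _
      have heq : ‖c q * s^q.1 * ((q.2 : ℝ) * y^(q.2-1))‖
          = c q * |s|^q.1 * ((q.2:ℝ) * |y|^(q.2-1)) := by
        simp [Real.norm_eq_abs, abs_mul, abs_pow, abs_of_nonneg (hc0 q), Nat.abs_cast]
      rw [heq]
      calc c q * |s|^q.1 * ((q.2:ℝ) * |y|^(q.2-1))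
          = (c q * (q.2:ℝ) * |y|^(q.2-1)) * |s|^q.1 := by ring
        _ ≤ (c q * (q.2:ℝ) * |y|^(q.2-1)) * 1 :=
            mul_le_mul_of_nonneg_left h2s
              (mul_nonneg (mul_nonneg (hc0 q) (Nat.cast_nonneg _)) hy0)
        _ = (c q * (q.2:ℝ)) * |y|^(q.2-1) := by ring
        _ ≤ (c q * (q.2:ℝ)) * 1 :=
            mul_le_mul_of_nonneg_left h1y (mul_nonneg (hc0 q) (Nat.cast_nonneg _))
        _ = c q * q.2 := mul_one _
    · refine h0.of_norm_bounded (fun q => ?_)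
      exact bnb_term_bound (hc0 q) hs (by norm_num : |(0:ℝ)| ≤ 1) q.1 q.2
  have hA2 : ∀ t : ℝ, (∑' q : ℕ × ℕ, c q * q.2 * s^q.1 * t^q.2) = t * Dg t := by
    intro t
    rw [hDg, ← tsum_mul_left]
    refine tsum_congr fun q => ?_
    obtain ⟨a, b⟩ := q
    cases b with
    | zero => simp
    | succ n =>
      simp only [Nat.add_sub_cancel, pow_succ]
      ring
  have hODE' : ∀ t ∈ Ioo (-1:ℝ) 1, t ≠ 0 → D t * Dg t = ν * (π2 + π0*s) * G t := by
    intro t htt ht0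
    have h := hODE t (habs t htt)
    rw [hA2 t] at h
    have h2' : t * (D t * Dg t) = t * (ν * (π2 + π0*s) * G t) := by
      show t * ((1 - π1*s - π2*t - π0*s*t) * Dg t) = t * (ν * (π2 + π0*s) * (∑' q : ℕ × ℕ, c q * s^q.1 * t^q.2))
      linear_combination h
    exact mul_left_cancel₀ ht0 h2'
  have hDpos : ∀ t : ℝ, |t| ≤ 1 → 0 < D t := fun t htt => hD s t hs htt
  have hDder : ∀ t : ℝ, HasDerivAt D (-(π2 + π0*s)) t := by
    intro t
    have base : HasDerivAt (fun t : ℝ => (1 - π1*s) + (-(π2+π0*s))*t) (-(π2+π0*s)) t := by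
      simpa using ((hasDerivAt_id t).const_mul (-(π2+π0*s))).const_add (1-π1*s)
    have heq2 : (fun t : ℝ => (1 - π1*s) + (-(π2+π0*s))*t) = D := by
      funext u; rw [hDdef]; ring
    rwa [heq2] at base
  set h : ℝ → ℝ := fun t => G t * (D t) ^ ν with hh
  have hrpow : ∀ t ∈ Ioo (-1:ℝ) 1,
      HasDerivAt (fun u => (D u) ^ ν) (ν * (D t)^(ν-1) * (-(π2+π0*s))) t := by
    intro t htt
    have := (hDder t).rpow_const (p := ν) (Or.inl (hDpos t (habs t htt)).ne')
    convert this using 1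
    ring
  have hdiff : ∀ x ∈ Ioo (-1:ℝ) 1, DifferentiableAt ℝ h x := by
    intro x hx
    exact ((hderivG x hx).differentiableAt).mul ((hrpow x hx).differentiableAt)
  have hzero : ∀ x ∈ Ioo (-1:ℝ) 1, x ≠ 0 → HasDerivAt h 0 x := by
    intro x hx hx0
    have hd := (hderivG x hx).mul (hrpow x hx)
    have hne : D x ≠ 0 := (hDpos x (habs x hx)).ne'
    have e1 : D x ^ (ν - 1) * D x = D x ^ ν := by
      rw [← Real.rpow_add_one hne (ν - 1)]; ring_nf
    have e2 : Dg x * D x ^ ν + G x * (ν * D x ^ (ν-1) * (-(π2+π0*s))) = 0 := by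
      have h3 := hODE' x hx hx0
      linear_combination Dg x * e1.symm + D x ^ (ν-1) * h3
    rwa [e2] at hd
  intro x hx y hy
  have ex := bnb_const_off_zero hdiff hzero x hx
  have ey := bnb_const_off_zero hdiff hzero y hy
  show G x * D x ^ ν = G y * D y ^ ν
  rw [show G x * D x ^ ν = h x from rfl, show G y * D y ^ ν = h y from rfl, ex, ey]

end BNBaux

/-- Expectation of a real-valued function under a distribution on `ℕ × ℕ`. -/
noncomputable def pExp (p : PMF (ℕ × ℕ)) (g : ℕ × ℕ → ℝ) : ℝ :=
  ∑' q : ℕ × ℕ, (p q).toReal * g q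

/-- `isBNB ν π1 π2 π0 p` says that `p` is the bivariate negative-binomial
distribution `BNB(ν; π1, π2, π0)`, i.e. its joint probability generating function
is `((1 - π•)/(1 - π1 s - π2 t - π0 s t))^ν` for all `|s|, |t| ≤ 1`,
where `π• = π0 + π1 + π2`. -/
def isBNB (ν π1 π2 π0 : ℝ) (p : PMF (ℕ × ℕ)) : Prop :=
  ∀ s t : ℝ, |s| ≤ 1 → |t| ≤ 1 →
    (∑' q : ℕ × ℕ, (p q).toReal * s ^ q.1 * t ^ q.2)
      = ((1 - (π0 + π1 + π2)) / (1 - π1 * s - π2 * t - π0 * s * t)) ^ ν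

theorem stein_bnb_converse (ν π1 π2 π0 : ℝ) (hν : 0 < ν)
    (hπ1 : π1 ∈ Set.Ioo (0 : ℝ) 1) (hπ2 : π2 ∈ Set.Ioo (0 : ℝ) 1)
    (hπ0 : π0 ∈ Set.Ioo (-(π1 * π2)) 1) (hb : π0 + π1 + π2 < 1)
    (p : PMF (ℕ × ℕ))
    (hmom : ∀ r s : ℕ,
      Summable (fun q : ℕ × ℕ => (p q).toReal * (q.1 : ℝ) ^ r * (q.2 : ℝ) ^ s))
    (hstein1 : ∀ f : ℕ × ℕ → ℝ, (∃ C : ℝ, ∀ q : ℕ × ℕ, |f q| ≤ C) →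
      pExp p (fun q => (q.1 : ℝ) * f q) - π2 * pExp p (fun q => (q.1 : ℝ) * f (q.1, q.2 + 1))
        = π1 * pExp p (fun q => (ν + (q.1 : ℝ)) * f (q.1 + 1, q.2))
          + π0 * pExp p (fun q => (ν + (q.1 : ℝ)) * f (q.1 + 1, q.2 + 1)))
    (hstein2 : ∀ f : ℕ × ℕ → ℝ, (∃ C : ℝ, ∀ q : ℕ × ℕ, |f q| ≤ C) →
      pExp p (fun q => (q.2 : ℝ) * f q) - π1 * pExp p (fun q => (q.2 : ℝ) * f (q.1 + 1, q.2))
        = π2 * pExp p (fun q => (ν + (q.2 : ℝ)) * f (q.1, q.2 + 1))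
          + π0 * pExp p (fun q => (ν + (q.2 : ℝ)) * f (q.1 + 1, q.2 + 1))) :
    ∀ s t : ℝ, |s| < 1 → |t| < 1 →
      (∑' q : ℕ × ℕ, (p q).toReal * s ^ q.1 * t ^ q.2)
        = ((1 - (π0 + π1 + π2)) / (1 - π1 * s - π2 * t - π0 * s * t)) ^ ν := by
  have hP0 : ∀ q : ℕ × ℕ, 0 ≤ (p q).toReal := fun q => ENNReal.toReal_nonneg
  have hPsum : Summable (fun q : ℕ × ℕ => (p q).toReal) := by
    have := hmom 0 0; simpa using this
  have h1 : Summable (fun q : ℕ × ℕ => (p q).toReal * q.1) := by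
    have := hmom 1 0; simpa using this
  have h2 : Summable (fun q : ℕ × ℕ => (p q).toReal * q.2) := by
    have := hmom 0 1; simpa using this
  have hP10 : ∀ q : ℕ × ℕ, 0 ≤ (p q).toReal * q.1 :=
    fun q => mul_nonneg (hP0 q) (Nat.cast_nonneg _)
  have hP20 : ∀ q : ℕ × ℕ, 0 ≤ (p q).toReal * q.2 :=
    fun q => mul_nonneg (hP0 q) (Nat.cast_nonneg _)
  have hDpos := bnb_posD π1 π2 π0 hπ1 hπ2 hπ0 hb
  -- Stein identity specialization, first coordinate
  have ode1 : ∀ u v : ℝ, |u| ≤ 1 → |v| ≤ 1 →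
      (1 - π1*u - π2*v - π0*u*v) * (∑' q : ℕ × ℕ, (p q).toReal * q.1 * u^q.1 * v^q.2)
        = ν * (π1 + π0*v) * u * (∑' q : ℕ × ℕ, (p q).toReal * u^q.1 * v^q.2) := by
    intro u v hu hv
    have SG := bnb_summable_weighted hP0 hPsum hu hv
    have SA1 : Summable (fun q : ℕ × ℕ => (p q).toReal * q.1 * u^q.1 * v^q.2) :=
      bnb_summable_weighted hP10 h1 hu hv
    have hbdd : ∃ C : ℝ, ∀ q : ℕ × ℕ, |u^q.1 * v^q.2| ≤ C := by
      refine ⟨1, fun q => ?_⟩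
      rw [abs_mul, abs_pow, abs_pow]
      exact mul_le_one₀ (pow_le_one₀ (abs_nonneg u) hu) (pow_nonneg (abs_nonneg v) _)
        (pow_le_one₀ (abs_nonneg v) hv)
    have heq := hstein1 (fun q => u^q.1 * v^q.2) hbdd
    simp only [pExp] at heq
    have e1 : (∑' (q : ℕ × ℕ), (p q).toReal * ((q.1:ℝ) * (u ^ q.1 * v ^ q.2)))
        = ∑' q : ℕ × ℕ, (p q).toReal * q.1 * u^q.1 * v^q.2 :=
      tsum_congr fun q => by ring
    have e2 : (∑' (q : ℕ × ℕ), (p q).toReal * ((q.1:ℝ) * (u ^ q.1 * v ^ (q.2 + 1))))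
        = v * ∑' q : ℕ × ℕ, (p q).toReal * q.1 * u^q.1 * v^q.2 := by
      rw [← tsum_mul_left]
      exact tsum_congr fun q => by rw [pow_succ]; ring
    have e3 : (∑' (q : ℕ × ℕ), (p q).toReal * ((ν + (q.1:ℝ)) * (u ^ (q.1 + 1) * v ^ q.2)))
        = (u*ν) * (∑' q : ℕ × ℕ, (p q).toReal * u^q.1 * v^q.2)
          + u * ∑' q : ℕ × ℕ, (p q).toReal * q.1 * u^q.1 * v^q.2 := by
      have hpt : ∀ q : ℕ × ℕ, (p q).toReal * ((ν + (q.1:ℝ)) * (u ^ (q.1 + 1) * v ^ q.2))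
          = (u*ν) * ((p q).toReal * u^q.1 * v^q.2)
            + u * ((p q).toReal * q.1 * u^q.1 * v^q.2) := by
        intro q; rw [pow_succ]; ring
      rw [tsum_congr hpt, Summable.tsum_add (SG.mul_left _) (SA1.mul_left _),
        tsum_mul_left, tsum_mul_left]
    have e4 : (∑' (q : ℕ × ℕ), (p q).toReal * ((ν + (q.1:ℝ)) * (u ^ (q.1 + 1) * v ^ (q.2 + 1))))
        = (u*v*ν) * (∑' q : ℕ × ℕ, (p q).toReal * u^q.1 * v^q.2)
          + (u*v) * ∑' q : ℕ × ℕ, (p q).toReal * q.1 * u^q.1 * v^q.2 := by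
      have hpt : ∀ q : ℕ × ℕ, (p q).toReal * ((ν + (q.1:ℝ)) * (u ^ (q.1 + 1) * v ^ (q.2 + 1)))
          = (u*v*ν) * ((p q).toReal * u^q.1 * v^q.2)
            + (u*v) * ((p q).toReal * q.1 * u^q.1 * v^q.2) := by
        intro q; rw [pow_succ, pow_succ]; ring
      rw [tsum_congr hpt, Summable.tsum_add (SG.mul_left _) (SA1.mul_left _),
        tsum_mul_left, tsum_mul_left]
    rw [e1, e2, e3, e4] at heq
    linear_combination heq
  -- Stein identity specialization, second coordinate
  have ode2 : ∀ u v : ℝ, |u| ≤ 1 → |v| ≤ 1 →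
      (1 - π1*u - π2*v - π0*u*v) * (∑' q : ℕ × ℕ, (p q).toReal * q.2 * u^q.1 * v^q.2)
        = ν * (π2 + π0*u) * v * (∑' q : ℕ × ℕ, (p q).toReal * u^q.1 * v^q.2) := by
    intro u v hu hv
    have SG := bnb_summable_weighted hP0 hPsum hu hv
    have SA2 : Summable (fun q : ℕ × ℕ => (p q).toReal * q.2 * u^q.1 * v^q.2) :=
      bnb_summable_weighted hP20 h2 hu hv
    have hbdd : ∃ C : ℝ, ∀ q : ℕ × ℕ, |u^q.1 * v^q.2| ≤ C := by
      refine ⟨1, fun q => ?_⟩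
      rw [abs_mul, abs_pow, abs_pow]
      exact mul_le_one₀ (pow_le_one₀ (abs_nonneg u) hu) (pow_nonneg (abs_nonneg v) _)
        (pow_le_one₀ (abs_nonneg v) hv)
    have heq := hstein2 (fun q => u^q.1 * v^q.2) hbdd
    simp only [pExp] at heq
    have e1 : (∑' (q : ℕ × ℕ), (p q).toReal * ((q.2:ℝ) * (u ^ q.1 * v ^ q.2)))
        = ∑' q : ℕ × ℕ, (p q).toReal * q.2 * u^q.1 * v^q.2 :=
      tsum_congr fun q => by ring
    have e2 : (∑' (q : ℕ × ℕ), (p q).toReal * ((q.2:ℝ) * (u ^ (q.1 + 1) * v ^ q.2)))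
        = u * ∑' q : ℕ × ℕ, (p q).toReal * q.2 * u^q.1 * v^q.2 := by
      rw [← tsum_mul_left]
      exact tsum_congr fun q => by rw [pow_succ]; ring
    have e3 : (∑' (q : ℕ × ℕ), (p q).toReal * ((ν + (q.2:ℝ)) * (u ^ q.1 * v ^ (q.2 + 1))))
        = (v*ν) * (∑' q : ℕ × ℕ, (p q).toReal * u^q.1 * v^q.2)
          + v * ∑' q : ℕ × ℕ, (p q).toReal * q.2 * u^q.1 * v^q.2 := by
      have hpt : ∀ q : ℕ × ℕ, (p q).toReal * ((ν + (q.2:ℝ)) * (u ^ q.1 * v ^ (q.2 + 1)))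
          = (v*ν) * ((p q).toReal * u^q.1 * v^q.2)
            + v * ((p q).toReal * q.2 * u^q.1 * v^q.2) := by
        intro q; rw [pow_succ]; ring
      rw [tsum_congr hpt, Summable.tsum_add (SG.mul_left _) (SA2.mul_left _),
        tsum_mul_left, tsum_mul_left]
    have e4 : (∑' (q : ℕ × ℕ), (p q).toReal * ((ν + (q.2:ℝ)) * (u ^ (q.1 + 1) * v ^ (q.2 + 1))))
        = (u*v*ν) * (∑' q : ℕ × ℕ, (p q).toReal * u^q.1 * v^q.2)
          + (u*v) * ∑' q : ℕ × ℕ, (p q).toReal * q.2 * u^q.1 * v^q.2 := by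
      have hpt : ∀ q : ℕ × ℕ, (p q).toReal * ((ν + (q.2:ℝ)) * (u ^ (q.1 + 1) * v ^ (q.2 + 1)))
          = (u*v*ν) * ((p q).toReal * u^q.1 * v^q.2)
            + (u*v) * ((p q).toReal * q.2 * u^q.1 * v^q.2) := by
        intro q; rw [pow_succ, pow_succ]; ring
      rw [tsum_congr hpt, Summable.tsum_add (SG.mul_left _) (SA2.mul_left _),
        tsum_mul_left, tsum_mul_left]
    rw [e1, e2, e3, e4] at heq
    linear_combination heq
  intro s t hs ht
  have hs1 : |s| ≤ 1 := le_of_lt hs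
  have ht1 : |t| ≤ 1 := le_of_lt ht
  have hsIoo : s ∈ Ioo (-1:ℝ) 1 := abs_lt.mp hs
  have htIoo : t ∈ Ioo (-1:ℝ) 1 := abs_lt.mp ht
  have const_t := bnb_const_in_t ν π1 π2 π0 hν hDpos (fun q => (p q).toReal) hP0 hPsum h2
      s hs1 (fun v hv => ode2 s v hs1 hv)
  have const_s : ∀ t' : ℝ, |t'| ≤ 1 → ∀ x ∈ Ioo (-1:ℝ) 1, ∀ y ∈ Ioo (-1:ℝ) 1,
      (∑' q : ℕ × ℕ, (p q).toReal * x^q.1 * t'^q.2) * (1 - π1*x - π2*t' - π0*x*t') ^ ν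
        = (∑' q : ℕ × ℕ, (p q).toReal * y^q.1 * t'^q.2) * (1 - π1*y - π2*t' - π0*y*t') ^ ν :=
    fun t' ht' => bnb_const_in_s ν π1 π2 π0 hν hDpos (fun q => (p q).toReal) hP0 hPsum h1
      t' ht' (fun u hu => ode1 u t' hu ht')
  set K := (∑' q : ℕ × ℕ, (p q).toReal * s ^ q.1 * t ^ q.2)
      * (1 - π1*s - π2*t - π0*s*t) ^ ν with hKdef
  have hK : ∀ r ∈ Ioo (0:ℝ) 1,
      (∑' q : ℕ × ℕ, (p q).toReal * r^q.1 * r^q.2) * (1 - π1*r - π2*r - π0*r*r) ^ ν = K := by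
    intro r hr
    have hrIoo : r ∈ Ioo (-1:ℝ) 1 := ⟨lt_trans (by norm_num) hr.1, hr.2⟩
    have hr1 : |r| ≤ 1 := abs_le.mpr ⟨by linarith [hr.1], le_of_lt hr.2⟩
    have step1 : K = (∑' q : ℕ × ℕ, (p q).toReal * s^q.1 * r^q.2)
        * (1 - π1*s - π2*r - π0*s*r) ^ ν := const_t t htIoo r hrIoo
    have step2 : (∑' q : ℕ × ℕ, (p q).toReal * s^q.1 * r^q.2)
        * (1 - π1*s - π2*r - π0*s*r) ^ ν
        = (∑' q : ℕ × ℕ, (p q).toReal * r^q.1 * r^q.2)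
          * (1 - π1*r - π2*r - π0*r*r) ^ ν := const_s r hr1 s hsIoo r hrIoo
    rw [step1, step2]
  have hone : (∑' q : ℕ × ℕ, (p q).toReal) = 1 := by
    have h := ENNReal.tsum_toReal_eq (fun q : ℕ × ℕ => PMF.apply_ne_top p q)
    rw [← h, p.tsum_coe, ENNReal.toReal_one]
  have hne : (𝓝[Ioo (0:ℝ) 1] (1:ℝ)).NeBot := by
    refine mem_closure_iff_nhdsWithin_neBot.mp ?_
    rw [closure_Ioo (by norm_num : (0:ℝ) ≠ 1)]
    exact ⟨by norm_num, le_refl 1⟩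
  have T1 : Tendsto (fun r : ℝ => ∑' q : ℕ × ℕ, (p q).toReal * r^q.1 * r^q.2)
      (𝓝[Ioo (0:ℝ) 1] 1) (𝓝 1) := by
    have hmain := tendsto_tsum_of_dominated_convergence
      (𝓕 := 𝓝[Ioo (0:ℝ) 1] (1:ℝ))
      (f := fun (r : ℝ) (q : ℕ × ℕ) => (p q).toReal * r^q.1 * r^q.2)
      (g := fun q : ℕ × ℕ => (p q).toReal)
      (bound := fun q : ℕ × ℕ => (p q).toReal) hPsum ?_ ?_
    · rw [hone] at hmain; exact hmain
    · intro q
      have hc : Continuous (fun r : ℝ => (p q).toReal * r^q.1 * r^q.2) :=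
        (continuous_const.mul (continuous_pow _)).mul (continuous_pow _)
      have h := hc.tendsto 1
      simp only [one_pow, mul_one] at h
      exact h.mono_left nhdsWithin_le_nhds
    · refine eventually_mem_nhdsWithin.mono fun r hr q => ?_
      have hr1 : |r| ≤ 1 := abs_le.mpr ⟨by linarith [hr.1], le_of_lt hr.2⟩
      exact bnb_term_bound (hP0 q) hr1 hr1 q.1 q.2
  have hpos1 : (0:ℝ) < 1 - (π0+π1+π2) := by linarith
  have T2 : Tendsto (fun r : ℝ => (1 - π1*r - π2*r - π0*r*r) ^ ν)
      (𝓝[Ioo (0:ℝ) 1] 1) (𝓝 ((1 - (π0+π1+π2)) ^ ν)) := by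
    have hcb : Tendsto (fun r : ℝ => 1 - π1*r - π2*r - π0*r*r) (𝓝 1)
        (𝓝 (1 - (π0+π1+π2))) := by
      have hc : Continuous (fun r : ℝ => 1 - π1*r - π2*r - π0*r*r) :=
        ((((continuous_const.sub (continuous_const.mul continuous_id)).sub
          (continuous_const.mul continuous_id)).sub
          ((continuous_const.mul continuous_id).mul continuous_id)))
      have h := hc.tendsto 1
      convert h using 2
      ring
    have hco : ContinuousAt (fun x : ℝ => x ^ ν) (1 - (π0+π1+π2)) :=
      Real.continuousAt_rpow_const _ _ (Or.inl hpos1.ne')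
    exact (hco.tendsto.comp hcb).mono_left nhdsWithin_le_nhds
  have T3 := T1.mul T2
  rw [one_mul] at T3
  have T4 : Tendsto (fun r : ℝ =>
      (∑' q : ℕ × ℕ, (p q).toReal * r^q.1 * r^q.2) * (1 - π1*r - π2*r - π0*r*r) ^ ν)
      (𝓝[Ioo (0:ℝ) 1] 1) (𝓝 K) := by
    refine Tendsto.congr' ?_ tendsto_const_nhds
    exact eventually_mem_nhdsWithin.mono fun r hr => (hK r hr).symm
  have hKval : K = (1 - (π0+π1+π2)) ^ ν := tendsto_nhds_unique T4 T3
  have hDst := hDpos s t hs1 ht1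
  rw [Real.div_rpow (by linarith) hDst.le,
    eq_div_iff (Real.rpow_pos_of_pos hDst ν).ne']
  rw [← hKdef]
  exact hKval
end

section
/- Let ν > 0, π1, π2 ∈ (0, 1), π0 ∈ (−π1·π2, 1) with π• := π0 + π1 + π2 < 1, and let p(x, y) denote the joint probability mass function of the bivariate negative-binomial distribution BNB(ν; π1, π2, π0), with the convention p(x, y) = 0 if x < 0 or y < 0. Then for all integers x, y ≥ 0: x · p(x, y) = π2 · x · p(x, y − 1) + π1 · (ν + x − 1) · p(x − 1, y) + π0 · (ν + x − 1) · p(x − 1, y − 1), and y · p(x, y) = π1 · y · p(x − 1, y) + π2 · (ν + y − 1) · p(x, y − 1) + π0 · (ν + y − 1) · p(x − 1, y − 1). -/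
open scoped NNReal ENNReal

open Set

-- L1: uniqueness of power series coefficients, hand-rolled
section
variable {c : ℕ → ℝ}

lemma clamp_cont : Continuous (fun t : ℝ => max (min t 1) 0) := by fun_prop

lemma tsum_pow_zero (c : ℕ → ℝ) : ∑' n, c n * (0:ℝ)^n = c 0 := by
  rw [tsum_eq_single 0]
  · simp
  · intro b hb; simp [zero_pow hb]

lemma coeff_zero_of_tsum_zero (hc : Summable (fun n => |c n|))
    (h : ∀ t ∈ Ioo (0:ℝ) 1, ∑' n, c n * t^n = 0) : c 0 = 0 := by
  set φ : ℝ → ℝ := fun t => max (min t 1) 0 with hφ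
  have hφ01 : ∀ t, φ t ∈ Icc (0:ℝ) 1 := fun t => ⟨le_max_right _ _, by
    simp only [φ, max_le_iff]; exact ⟨min_le_right _ _, zero_le_one⟩⟩
  have hF : Continuous (fun t => ∑' n, c n * (φ t)^n) := by
    apply continuous_tsum (u := fun n => |c n|) _ hc
    · intro n t
      have h01 := hφ01 t
      have : |φ t ^ n| ≤ 1 := by
        rw [abs_pow]; apply pow_le_one₀ (abs_nonneg _)
        rw [abs_le]; constructor <;> linarith [h01.1, h01.2]
      calc ‖c n * φ t ^ n‖ = |c n| * |φ t ^ n| := abs_mul _ _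
        _ ≤ |c n| * 1 := by gcongr
        _ = |c n| := mul_one _
    · intro n; fun_prop
  have hne : (nhdsWithin (0:ℝ) (Ioo (0:ℝ) 1)).NeBot := by
    rw [← mem_closure_iff_nhdsWithin_neBot, closure_Ioo one_ne_zero.symm]
    exact ⟨le_refl 0, zero_le_one⟩
  have h1 : Filter.Tendsto (fun t => ∑' n, c n * (φ t)^n) (nhdsWithin 0 (Ioo (0:ℝ) 1))
      (nhds (∑' n, c n * (φ 0)^n)) :=
    (hF.tendsto 0).mono_left nhdsWithin_le_nhds
  have h2 : Filter.Tendsto (fun t => ∑' n, c n * (φ t)^n) (nhdsWithin 0 (Ioo (0:ℝ) 1))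
      (nhds 0) := by
    apply Filter.Tendsto.congr' _ tendsto_const_nhds
    filter_upwards [self_mem_nhdsWithin] with t ht
    have : φ t = t := by
      simp only [φ]; rw [min_eq_left ht.2.le, max_eq_left ht.1.le]
    rw [this]; exact (h t ht).symm
  have := tendsto_nhds_unique h1 h2
  have hφ0 : φ 0 = 0 := by simp [φ]
  rw [hφ0, tsum_pow_zero] at this
  exact this

lemma coeff_eq_zero_of_tsum_zero (hc : Summable (fun n => |c n|))
    (h : ∀ t ∈ Ioo (0:ℝ) 1, ∑' n, c n * t^n = 0) : ∀ n, c n = 0 := by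
  intro n
  induction n generalizing c with
  | zero => exact coeff_zero_of_tsum_zero hc h
  | succ n ih =>
    have hc0 : c 0 = 0 := coeff_zero_of_tsum_zero hc h
    have hcs : Summable (fun n => |c (n+1)|) := by
      rw [← summable_nat_add_iff 1] at hc; exact hc
    refine ih hcs ?_
    intro t ht
    have hsum : ∀ u ∈ Icc (-1:ℝ) 1, Summable (fun n => c n * u^n) := by
      intro u hu
      apply Summable.of_abs
      apply hc.of_nonneg_of_le (fun n => abs_nonneg _)
      intro n
      rw [abs_mul, abs_pow]
      calc |c n| * |u| ^ n ≤ |c n| * 1 ^ n := by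
            gcongr
            rw [abs_le]; exact ⟨hu.1, hu.2⟩
        _ = |c n| := by simp
    have htmem : t ∈ Icc (-1:ℝ) 1 := ⟨by linarith [ht.1], ht.2.le⟩
    have h0 := h t ht
    have hshift : ∑' n, c n * t ^ n = c 0 * t ^ 0 + ∑' n, c (n+1) * t^(n+1) :=
      Summable.tsum_eq_zero_add (hsum t htmem)
    have : ∑' n, c (n+1) * t^(n+1) = t * ∑' n, c (n+1) * t^n := by
      rw [← tsum_mul_left]
      congr 1; ext n; ring
    rw [hshift, hc0, pow_zero, zero_mul, zero_add, this] at h0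
    rcases mul_eq_zero.mp h0 with h' | h'
    · exact absurd h' (ne_of_gt ht.1)
    · exact h'
end


noncomputable def bcoef (ν : ℝ) (n : ℕ) : ℝ := (∏ i ∈ Finset.range n, (ν + i)) / n.factorial

lemma bcoef_zero (ν : ℝ) : bcoef ν 0 = 1 := by simp [bcoef]

lemma bcoef_succ (ν : ℝ) (n : ℕ) :
    ((n:ℝ)+1) * bcoef ν (n+1) = (ν + n) * bcoef ν n := by
  have h1 : ((n+1).factorial : ℝ) = ((n:ℝ)+1) * n.factorial := by
    rw [Nat.factorial_succ]; push_cast; ring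
  have h2 : (n.factorial : ℝ) ≠ 0 := Nat.cast_ne_zero.mpr n.factorial_ne_zero
  have h3 : ((n:ℝ)+1) ≠ 0 := by positivity
  simp only [bcoef, Finset.prod_range_succ, h1]
  field_simp

lemma bcoef_pos {ν : ℝ} (hν : 0 < ν) (n : ℕ) : 0 < bcoef ν n := by
  apply div_pos _ (by positivity)
  apply Finset.prod_pos
  intro i _
  positivity

lemma summable_main {ν : ℝ} (hν : 0 < ν) {u : ℝ} (hu0 : 0 ≤ u) (hu1 : u < 1) :
    Summable (fun n => (ν + n) * bcoef ν n * u ^ n) := by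
  set r := (1+u)/2 with hr
  have hur : u < r := by rw [hr]; linarith
  have hr1 : r < 1 := by rw [hr]; linarith
  apply summable_of_ratio_norm_eventually_le hr1
  rw [Filter.eventually_atTop]
  refine ⟨⌈ν/(r-u)⌉₊, fun n hn => ?_⟩
  have hb := bcoef_pos hν n
  have hb' := bcoef_pos hν (n+1)
  have hnn : 0 ≤ (n:ℝ) := Nat.cast_nonneg n
  have hnorm : ∀ m : ℕ, ‖(ν + m) * bcoef ν m * u ^ m‖ = (ν + m) * bcoef ν m * u ^ m := by
    intro m
    apply abs_of_nonneg
    have := bcoef_pos hν m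
    have : (0:ℝ) ≤ (m:ℝ) := Nat.cast_nonneg m
    positivity
  rw [hnorm, hnorm]
  -- (ν+n+1) * bcoef (n+1) * u^(n+1) ≤ r * (ν+n) * bcoef n * u^n
  have hstep : bcoef ν (n+1) = (ν + n) * bcoef ν n / ((n:ℝ)+1) := by
    have := bcoef_succ ν n
    field_simp
    linarith [this]
  -- n ≥ ⌈ν/(r-u)⌉₊ gives (n:ℝ) ≥ ν/(r-u), so ν * u ≤ ν ≤ (r-u)*n ≤ (r-u)*(n+1)
  have hge : ν/(r-u) ≤ (n:ℝ) := le_trans (Nat.le_ceil _) (Nat.cast_le.mpr hn)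
  have hru : 0 < r - u := by linarith
  have hν_le : ν ≤ (r-u)*(n+1) := by
    rw [div_le_iff₀ hru] at hge
    nlinarith
  -- key scalar inequality : (ν+n+1)*u ≤ r*(n+1)
  have hkey : (ν + n + 1) * u ≤ r * ((n:ℝ)+1) := by nlinarith
  have hun : (0:ℝ) ≤ u^n := by positivity
  calc (ν + ((n:ℕ)+1:ℕ)) * bcoef ν (n+1) * u ^ (n+1)
      = ((ν + n + 1) * u) * ((ν + n) * bcoef ν n / ((n:ℝ)+1)) * u^n := by
        rw [hstep]; push_cast; ring
    _ ≤ (r * ((n:ℝ)+1)) * ((ν + n) * bcoef ν n / ((n:ℝ)+1)) * u^n := by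
        have hpos : 0 ≤ (ν + n) * bcoef ν n / ((n:ℝ)+1) := by positivity
        apply mul_le_mul_of_nonneg_right _ hun
        exact mul_le_mul_of_nonneg_right hkey hpos
    _ = r * ((ν + n) * bcoef ν n * u^n) := by field_simp

lemma summable_bcoef {ν : ℝ} (hν : 0 < ν) {u : ℝ} (hu0 : 0 ≤ u) (hu1 : u < 1) :
    Summable (fun n => bcoef ν n * u ^ n) := by
  apply ((summable_main hν hu0 hu1).mul_left (1/ν)).of_nonneg_of_le
  · intro n; have := bcoef_pos hν n; positivity
  · intro n
    have hb := (bcoef_pos hν n).le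
    have hun : (0:ℝ) ≤ u^n := by positivity
    have hn : (0:ℝ) ≤ (n:ℝ) := Nat.cast_nonneg n
    rw [div_mul_eq_mul_div, le_div_iff₀ hν]
    nlinarith [mul_nonneg (mul_nonneg hn hb) hun]

lemma tsum_pow_zero' (c : ℕ → ℝ) : ∑' n, c n * (0:ℝ)^n = c 0 := by
  rw [tsum_eq_single 0]
  · simp
  · intro b hb; simp [zero_pow hb]

lemma summable_deriv_bound {ν : ℝ} (hν : 0 < ν) {c : ℝ} (hc0 : 0 ≤ c) (hc1 : c < 1) :
    Summable (fun n : ℕ => bcoef ν n * ((n:ℝ) * c^(n-1))) := by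
  rw [← summable_nat_add_iff 1]
  apply Summable.congr (summable_main hν hc0 hc1)
  intro n
  have : ((n:ℕ)+1:ℕ) - 1 = n := rfl
  rw [this]
  push_cast
  rw [show bcoef ν (n+1) * (((n:ℝ)+1) * c ^ n) = (((n:ℝ)+1) * bcoef ν (n+1)) * c ^ n from by ring,
    bcoef_succ]

theorem tsum_bcoef_eq {ν : ℝ} (hν : 0 < ν) {u : ℝ} (hu0 : 0 ≤ u) (hu1 : u < 1) :
    ∑' n, bcoef ν n * u ^ n = (1 - u) ^ (-ν) := by
  rcases eq_or_lt_of_le hu0 with h0 | hupos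
  · rw [← h0]
    rw [tsum_pow_zero', bcoef_zero]
    norm_num
  set c := (1+u)/2 with hc
  have huc : u < c := by rw [hc]; linarith
  have hc0 : 0 ≤ c := by rw [hc]; linarith
  have hc1 : c < 1 := by rw [hc]; linarith
  set s : Set ℝ := Ioo (-c) c with hs
  have hsopen : IsOpen s := isOpen_Ioo
  have hsconn : IsPreconnected s := (convex_Ioo _ _).isPreconnected
  have h0mem : (0:ℝ) ∈ s := ⟨by linarith, by linarith⟩
  set g : ℕ → ℝ → ℝ := fun n y => bcoef ν n * y^n with hg
  set g' : ℕ → ℝ → ℝ := fun n y => bcoef ν n * ((n:ℝ) * y^(n-1)) with hg'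
  set B : ℕ → ℝ := fun n => bcoef ν n * ((n:ℝ) * c^(n-1)) with hB
  have hBsum : Summable B := summable_deriv_bound hν hc0 hc1
  have hder : ∀ (n : ℕ) (y : ℝ), y ∈ s → HasDerivAt (g n) (g' n y) y := fun n y _ =>
    (hasDerivAt_pow n y).const_mul (bcoef ν n)
  have hbound : ∀ (n : ℕ) (y : ℝ), y ∈ s → ‖g' n y‖ ≤ B n := by
    intro n y hy
    have hyc : |y| ≤ c := by
      rw [abs_le]; exact ⟨hy.1.le, hy.2.le⟩
    have hb := (bcoef_pos hν n).le
    have he : ‖g' n y‖ = bcoef ν n * ((n:ℝ) * |y|^(n-1)) := by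
      simp only [hg', norm_mul, Real.norm_eq_abs, abs_pow, Nat.abs_cast, abs_of_nonneg hb]
    rw [he, hB]
    have hpow : |y|^(n-1) ≤ c^(n-1) := pow_le_pow_left₀ (abs_nonneg y) hyc _
    have hn : (0:ℝ) ≤ (n:ℝ) := n.cast_nonneg
    exact mul_le_mul_of_nonneg_left (mul_le_mul_of_nonneg_left hpow hn) hb
  have hg0 : Summable fun n => g n 0 := by
    apply summable_of_ne_finset_zero (s := {0})
    intro n hn
    simp only [Finset.mem_singleton] at hn
    simp [hg, zero_pow hn]
  set f : ℝ → ℝ := fun y => ∑' n, g n y with hf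
  have hF : ∀ y ∈ s, HasDerivAt f (∑' n, g' n y) y := fun y hy =>
    hasDerivAt_tsum_of_isPreconnected hBsum hsopen hsconn hder hbound h0mem hg0 hy
  -- summability helpers at any y ∈ s
  have hymain : ∀ y ∈ s, Summable (fun n => (ν+n) * bcoef ν n * y^n) := by
    intro y hy
    apply Summable.of_norm_bounded (summable_main hν hc0 hc1)
    intro n
    have hb := (bcoef_pos hν n).le
    have hyc : |y| ≤ c := by rw [abs_le]; exact ⟨hy.1.le, hy.2.le⟩
    have hn : (0:ℝ) ≤ (n:ℝ) := Nat.cast_nonneg n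
    simp only [norm_mul, Real.norm_eq_abs, abs_pow]
    rw [abs_of_nonneg hb, abs_of_nonneg (by linarith : (0:ℝ) ≤ ν + n)]
    have hn : (0:ℝ) ≤ (n:ℝ) := n.cast_nonneg
    have hpow : |y|^n ≤ c^n := pow_le_pow_left₀ (abs_nonneg y) hyc _
    exact mul_le_mul_of_nonneg_left hpow (mul_nonneg (by linarith) hb)

  have hfsum : ∀ y ∈ s, Summable (fun n => g n y) := by
    intro y hy
    apply Summable.of_norm_bounded (summable_bcoef hν hc0 hc1)
    intro n
    have hb := (bcoef_pos hν n).le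
    have hyc : |y| ≤ c := by rw [abs_le]; exact ⟨hy.1.le, hy.2.le⟩
    simp only [hg, norm_mul, Real.norm_eq_abs, abs_pow]
    rw [abs_of_nonneg hb]
    have hpow : |y|^n ≤ c^n := pow_le_pow_left₀ (abs_nonneg y) hyc _
    exact mul_le_mul_of_nonneg_left hpow hb
  have hg'rw : ∀ y : ℝ, Summable (fun n => g' n y) → ∑' n, g' n y = ∑' n, (ν+n) * bcoef ν n * y^n := by
    intro y hsum
    rw [Summable.tsum_eq_zero_add hsum]
    have h0 : g' 0 y = 0 := by simp [hg']
    rw [h0, zero_add]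
    apply tsum_congr
    intro n
    have : ((n:ℕ)+1:ℕ) - 1 = n := rfl
    simp only [hg', this]
    push_cast
    rw [show bcoef ν (n+1) * (((n:ℝ)+1) * y ^ n) = (((n:ℝ)+1) * bcoef ν (n+1)) * y ^ n from by ring,
      bcoef_succ]
  have hkey : ∀ y ∈ s, (1 - y) * (∑' n, g' n y) = ν * f y := by
    intro y hy
    have hg'sum : Summable (fun n => g' n y) :=
      Summable.of_norm_bounded hBsum (fun n => hbound n y hy)
    have hsum2 := hymain y hy
    have hsum3 : Summable (fun n : ℕ => ν * (bcoef ν n * y^n)) := (hfsum y hy).mul_left ν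
    have hsumn : Summable (fun n : ℕ => (n:ℝ) * bcoef ν n * y^n) := by
      apply Summable.congr (hsum2.sub hsum3)
      intro n; ring
    have eν : ν * f y = ∑' n : ℕ, ν * (bcoef ν n * y^n) := (tsum_mul_left).symm
    have ediff : (∑' n, g' n y) - ν * f y = ∑' n : ℕ, (n:ℝ) * bcoef ν n * y^n := by
      rw [hg'rw y hg'sum, eν, ← Summable.tsum_sub hsum2 hsum3]
      apply tsum_congr; intro n; ring
    have eshift : ∑' n : ℕ, (n:ℝ) * bcoef ν n * y^n = ∑' n : ℕ, (ν+n) * bcoef ν n * y^(n+1) := by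
      rw [Summable.tsum_eq_zero_add hsumn]
      norm_num
      apply tsum_congr
      intro n
      push_cast
      rw [show ((n:ℝ)+1) * bcoef ν (n+1) * y^(n+1) = (((n:ℝ)+1) * bcoef ν (n+1)) * y^(n+1) from by ring,
        bcoef_succ]
    have ey : y * (∑' n, g' n y) = ∑' n : ℕ, (ν+n) * bcoef ν n * y^(n+1) := by
      rw [hg'rw y hg'sum, ← tsum_mul_left]
      apply tsum_congr; intro n; ring
    have : (∑' n, g' n y) - ν * f y = y * (∑' n, g' n y) := by
      rw [ediff, eshift, ey]
    linarith [this]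
  have hh' : ∀ y ∈ s, HasDerivAt (fun z => f z * (1-z)^ν) 0 y := by
    intro y hy
    have h1y : (0:ℝ) < 1 - y := by
      have := hy.2; simp only [hs, mem_Ioo] at hy; linarith [hy.2]
    have hlin : HasDerivAt (fun z : ℝ => 1 - z) (-1) y := by
      simpa using (hasDerivAt_id y).const_sub 1
    have hrpow : HasDerivAt (fun x : ℝ => x ^ ν) (ν * (1-y) ^ (ν-1)) (1-y) :=
      Real.hasDerivAt_rpow_const (Or.inl h1y.ne')
    have hcomp : HasDerivAt (fun z : ℝ => (1 - z) ^ ν) ((ν * (1-y)^(ν-1)) * (-1)) y :=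
      HasDerivAt.comp y hrpow hlin
    have hmul := (hF y hy).mul hcomp
    refine hmul.congr_deriv ?_
    have hrw : (1-y)^(ν-1) = (1-y)^ν / (1-y) := by
      rw [Real.rpow_sub h1y, Real.rpow_one]
    rw [hrw]
    have hk := hkey y hy
    have h1yne : (1:ℝ) - y ≠ 0 := h1y.ne'
    field_simp
    linear_combination (((1-y):ℝ)^ν) * hk
  -- constancy on [0, u]
  have hsub : Icc (0:ℝ) u ⊆ s := by
    intro x hx
    exact ⟨by linarith [hx.1], by linarith [hx.2]⟩
  have hconst := constant_of_has_deriv_right_zero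
    (f := fun z => f z * (1-z)^ν) (a := 0) (b := u)
    (fun x hx => ((hh' x (hsub hx)).continuousAt).continuousWithinAt)
    (fun x hx => ((hh' x (hsub ⟨hx.1, hx.2.le⟩)).hasDerivWithinAt))
    u ⟨hu0, le_refl u⟩
  have hf0 : f 0 = 1 := by
    rw [hf]; simp only [hg]
    rw [tsum_pow_zero', bcoef_zero]
  have hconst2 : f u * (1-u)^ν = f 0 * ((1:ℝ)-0)^ν := hconst
  rw [hf0, one_mul, show ((1:ℝ)-0) = 1 by norm_num, Real.one_rpow] at hconst2
  have h1u : (0:ℝ) < 1 - u := by linarith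
  have hXpos : (0:ℝ) < (1-u)^ν := Real.rpow_pos_of_pos h1u ν
  have hfu : f u = ∑' n : ℕ, bcoef ν n * u^n := rfl
  rw [← hfu, Real.rpow_neg h1u.le]
  field_simp
  linarith [hconst2]

def shiftv (f : ℕ → ℝ) : ℕ → ℝ := fun y => if y = 0 then 0 else f (y-1)

lemma shiftv_summable {f : ℕ → ℝ} (hf : Summable f) : Summable (shiftv f) := by
  rw [← summable_nat_add_iff 1]
  apply hf.congr
  intro n
  simp [shiftv]

lemma summable_mul_pow {f : ℕ → ℝ} (hf : Summable f) (hf0 : ∀ n, 0 ≤ f n) {t : ℝ}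
    (ht0 : 0 ≤ t) (ht1 : t ≤ 1) : Summable (fun y => f y * t^y) := by
  apply hf.of_nonneg_of_le (fun n => by have := hf0 n; positivity)
  intro n
  have h1 : t^n ≤ 1 := pow_le_one₀ ht0 ht1
  have := hf0 n
  nlinarith

lemma tsum_shiftv {f : ℕ → ℝ} {t : ℝ} (hs : Summable (fun y => f y * t^y)) :
    ∑' y, shiftv f y * t^y = t * ∑' y, f y * t^y := by
  have h1 : Summable (fun y : ℕ => shiftv f y * t^y) := by
    rw [← summable_nat_add_iff 1]
    apply (hs.mul_left t).congr
    intro n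
    simp only [shiftv, Nat.succ_ne_zero, if_false, Nat.succ_sub_one]
    ring
  rw [Summable.tsum_eq_zero_add h1]
  have h0 : shiftv f 0 * t^0 = 0 := by simp [shiftv]
  rw [h0, zero_add, ← tsum_mul_left]
  apply tsum_congr
  intro n
  simp only [shiftv, Nat.succ_ne_zero, if_false, Nat.succ_sub_one]
  ring

set_option maxHeartbeats 1000000 in
lemma bnb_rec_main {ν π1 π2 π0 : ℝ} (hν : 0 < ν)
    (h1a : 0 < π1) (h1b : π1 < 1) (h2a : 0 < π2) (h2b : π2 < 1)
    (h0a : -(π1*π2) < π0) (hb : π0 + π1 + π2 < 1)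
    (w : ℕ → ℕ → ℝ) (hw0 : ∀ x y, 0 ≤ w x y)
    (hws : Summable (fun q : ℕ × ℕ => w q.1 q.2))
    (hG : ∀ s t : ℝ, 0 ≤ s → s < 1 → 0 ≤ t → t < 1 →
      ∑' q : ℕ × ℕ, w q.1 q.2 * s ^ q.1 * t ^ q.2
        = ((1 - (π0 + π1 + π2)) / (1 - π1*s - π2*t - π0*s*t)) ^ ν) :
    ∀ x y : ℕ, ((x:ℝ)+1) * w (x+1) y
      = π2 * ((x:ℝ)+1) * shiftv (w (x+1)) y
        + π1 * (ν + x) * w x y + π0 * (ν + x) * shiftv (w x) y := by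
  have hslice : ∀ x : ℕ, Summable (fun y => w x y) := by
    intro x
    exact hws.comp_injective (i := fun y => (x, y)) (fun a b h => (Prod.ext_iff.1 h).2)
  set a : ℕ → ℝ → ℝ := fun x t => ∑' y, w x y * t^y with ha
  have hasum : ∀ (x : ℕ) {t : ℝ}, 0 ≤ t → t ≤ 1 → Summable (fun y => w x y * t^y) := by
    intro x t ht0 ht1
    exact summable_mul_pow (hslice x) (hw0 x) ht0 ht1
  have ha0 : ∀ (x : ℕ) {t : ℝ}, 0 ≤ t → 0 ≤ a x t := by
    intro x t ht0
    apply tsum_nonneg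
    intro y
    have := hw0 x y
    positivity
  have haA : ∀ (x : ℕ) {t : ℝ}, 0 ≤ t → t ≤ 1 → a x t ≤ ∑' y, w x y := by
    intro x t ht0 ht1
    apply Summable.tsum_le_tsum _ (hasum x ht0 ht1) (hslice x)
    intro y
    have h1 : t^y ≤ 1 := pow_le_one₀ ht0 ht1
    have := hw0 x y
    nlinarith
  have hA : Summable (fun x : ℕ => ∑' y, w x y) := by
    have h1 : Summable (fun p : Σ _ : ℕ, ℕ => w p.1 p.2) :=
      (Equiv.sigmaEquivProd ℕ ℕ).summable_iff.mpr hws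
    exact h1.sigma' (fun x => hslice x)
  have hFub : ∀ s t : ℝ, 0 ≤ s → s < 1 → 0 ≤ t → t < 1 →
      ∑' x, a x t * s^x = ((1 - (π0+π1+π2)) / (1 - π1*s - π2*t - π0*s*t))^ν := by
    intro s t hs0 hs1 ht0 ht1
    rw [← hG s t hs0 hs1 ht0 ht1]
    have hq : Summable (fun q : ℕ×ℕ => w q.1 q.2 * s^q.1 * t^q.2) := by
      apply hws.of_nonneg_of_le
      · intro q; have := hw0 q.1 q.2; positivity
      · intro q
        have hp1 : s^q.1 ≤ 1 := pow_le_one₀ hs0 hs1.le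
        have hp2 : t^q.2 ≤ 1 := pow_le_one₀ ht0 ht1.le
        have hp1' : (0:ℝ) ≤ s^q.1 := by positivity
        have hp2' : (0:ℝ) ≤ t^q.2 := by positivity
        have := hw0 q.1 q.2
        exact le_trans (mul_le_of_le_one_right (mul_nonneg this hp1') hp2)
          (mul_le_of_le_one_right this hp1)
    rw [Summable.tsum_prod' hq (fun x => hq.prod_factor x)]
    apply tsum_congr
    intro x
    calc a x t * s^x = ∑' y, (w x y * t^y) * s^x := tsum_mul_right.symm
      _ = ∑' y, w x y * s^x * t^y := tsum_congr (fun y => by ring)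
  set A : ℝ := 1 - (π0+π1+π2) with hAdef
  have hApos : 0 < A := by rw [hAdef]; linarith
  -- coefficient formula at fixed t
  have hcoef : ∀ (t : ℝ), 0 ≤ t → t < 1 → ∀ x : ℕ,
      a x t = (A/(1-π2*t))^ν * bcoef ν x * ((π1+π0*t)/(1-π2*t))^x := by
    intro t ht0 ht1
    have h2t : 0 < 1 - π2*t := by nlinarith
    have hrnum : 0 < π1 + π0*t := by
      rcases le_or_gt 0 π0 with h|h
      · nlinarith
      · nlinarith [mul_nonneg (neg_nonneg.mpr h.le) (by linarith : (0:ℝ) ≤ 1 - t),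
          mul_pos h1a h2a]
    set r : ℝ := (π1+π0*t)/(1-π2*t) with hrdef
    set K : ℝ := (A/(1-π2*t))^ν with hKdef
    have hr0 : 0 < r := div_pos hrnum h2t
    have hr1 : r < 1 := by
      rw [hrdef, div_lt_one h2t]
      rcases le_or_gt 0 (π0+π2) with h|h
      · nlinarith
      · nlinarith [mul_nonneg ht0 (by linarith : (0:ℝ) ≤ -(π0+π2))]
    have hK0 : 0 < K := Real.rpow_pos_of_pos (div_pos hApos h2t) ν
    have hKsum : Summable (fun x => K * bcoef ν x * r^x) := by
      apply ((summable_bcoef hν hr0.le hr1).mul_left K).congr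
      intro n; ring
    have hax : Summable (fun x => a x t) := by
      apply hA.of_nonneg_of_le (fun x => ha0 x ht0)
      intro x
      exact haA x ht0 ht1.le
    have hgs : ∀ s : ℝ, 0 < s → s < 1 →
        ∑' x, (a x t - K * bcoef ν x * r^x) * s^x = 0 := by
      intro s hs0 hs1
      have hrs0 : (0:ℝ) ≤ r*s := by positivity
      have hrs1 : r*s < 1 := by nlinarith [mul_pos (sub_pos.2 hr1) (sub_pos.2 hs1)]
      have hD : (1 - π1*s - π2*t - π0*s*t) = (1-π2*t)*(1-r*s) := by
        rw [hrdef]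
        field_simp
        ring
      have hbin := tsum_bcoef_eq hν hrs0 hrs1
      have hrs1' : (0:ℝ) < 1 - r*s := by linarith
      have hrhs : (A/(1 - π1*s - π2*t - π0*s*t))^ν = K * (1-r*s)^(-ν) := by
        rw [hD, ← div_div, Real.div_rpow (by positivity) (by linarith : (0:ℝ) ≤ 1-r*s),
          Real.rpow_neg hrs1'.le, hKdef, div_eq_mul_inv]
      have hsum_s := hFub s t hs0.le hs1 ht0 ht1
      have hx1 : Summable (fun x => a x t * s^x) := by
        apply hax.of_nonneg_of_le
        · intro x
          have h1 := ha0 x ht0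
          positivity
        · intro x
          have h1 : s^x ≤ 1 := pow_le_one₀ hs0.le hs1.le
          have h2 := ha0 x ht0
          nlinarith
      have hx2 : Summable (fun x => K * bcoef ν x * r^x * s^x) := by
        apply ((summable_bcoef hν hrs0 hrs1).mul_left K).congr
        intro n
        rw [mul_pow]
        ring
      have hx2v : ∑' x, K * bcoef ν x * r^x * s^x = K * (1-r*s)^(-ν) := by
        rw [← hbin, ← tsum_mul_left]
        apply tsum_congr
        intro n
        rw [mul_pow]
        ring
      calc ∑' x, (a x t - K * bcoef ν x * r^x) * s^x
          = ∑' x, (a x t * s^x - K * bcoef ν x * r^x * s^x) := tsum_congr (fun x => by ring)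
        _ = (∑' x, a x t * s^x) - ∑' x, K * bcoef ν x * r^x * s^x := Summable.tsum_sub hx1 hx2
        _ = 0 := by rw [hsum_s, hx2v, hrhs]; ring
    have habs : Summable (fun x => |a x t - K * bcoef ν x * r^x|) := (hax.sub hKsum).abs
    have := coeff_eq_zero_of_tsum_zero habs (fun s hs => hgs s hs.1 hs.2)
    intro x
    have hx := this x
    linarith
  -- recursion for a in x
  have hrecA : ∀ (t : ℝ), 0 ≤ t → t < 1 → ∀ x : ℕ,
      (1 - π2*t) * (((x:ℝ)+1) * a (x+1) t) = (π1+π0*t) * ((ν+x) * a x t) := by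
    intro t ht0 ht1 x
    have h2t : 0 < 1 - π2*t := by nlinarith
    rw [hcoef t ht0 ht1 (x+1), hcoef t ht0 ht1 x]
    set r : ℝ := (π1+π0*t)/(1-π2*t) with hrdef
    set K : ℝ := (A/(1-π2*t))^ν with hKdef
    have hrmul : r * (1-π2*t) = π1+π0*t := by
      rw [hrdef]; exact div_mul_cancel₀ _ h2t.ne'
    have hbs := bcoef_succ ν x
    push_cast
    linear_combination (K*r^x*(π1+π0*t))*hbs + (K*r^x*((x:ℝ)+1)*bcoef ν (x+1))*hrmul
  -- extract coefficients in t
  intro x y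
  set c : ℕ → ℝ := fun y => ((x:ℝ)+1) * w (x+1) y - π2*((x:ℝ)+1)*shiftv (w (x+1)) y
    - π1*(ν+x)*w x y - π0*(ν+x)*shiftv (w x) y with hcdef
  have h1 : Summable (fun y => ((x:ℝ)+1) * w (x+1) y) := (hslice (x+1)).mul_left _
  have h2 : Summable (fun y => π2*((x:ℝ)+1)*shiftv (w (x+1)) y) := by
    apply ((shiftv_summable (hslice (x+1))).mul_left (π2*((x:ℝ)+1))).congr
    intro n; ring
  have h3 : Summable (fun y => π1*(ν+x)*w x y) := by
    apply ((hslice x).mul_left (π1*((ν:ℝ)+x))).congr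
    intro n; ring
  have h4 : Summable (fun y => π0*(ν+x)*shiftv (w x) y) := by
    apply ((shiftv_summable (hslice x)).mul_left (π0*((ν:ℝ)+x))).congr
    intro n; ring
  have hsummc : Summable c := ((h1.sub h2).sub h3).sub h4
  have htsum0 : ∀ t ∈ Ioo (0:ℝ) 1, ∑' n, c n * t^n = 0 := by
    intro t ht
    obtain ⟨ht0, ht1⟩ := ht
    have hS1 : Summable (fun y => w (x+1) y * t^y) := hasum (x+1) ht0.le ht1.le
    have hS0 : Summable (fun y => w x y * t^y) := hasum x ht0.le ht1.le
    have hsh1 : ∑' y, shiftv (w (x+1)) y * t^y = t * a (x+1) t := tsum_shiftv hS1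
    have hsh0 : ∑' y, shiftv (w x) y * t^y = t * a x t := tsum_shiftv hS0
    have hshS1 : Summable (fun y : ℕ => shiftv (w (x+1)) y * t^y) :=
      summable_mul_pow (shiftv_summable (hslice (x+1)))
        (fun n => by unfold shiftv; split <;> [rfl; exact hw0 _ _]) ht0.le ht1.le
    have hshS0 : Summable (fun y : ℕ => shiftv (w x) y * t^y) :=
      summable_mul_pow (shiftv_summable (hslice x))
        (fun n => by unfold shiftv; split <;> [rfl; exact hw0 _ _]) ht0.le ht1.le
    have P1 : Summable (fun y => (((x:ℝ)+1) * w (x+1) y) * t^y) := by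
      apply (hS1.mul_left (((x:ℝ)+1))).congr
      intro n; ring
    have P2 : Summable (fun y => (π2*((x:ℝ)+1)*shiftv (w (x+1)) y) * t^y) := by
      apply (hshS1.mul_left (π2*((x:ℝ)+1))).congr
      intro n; ring
    have P3 : Summable (fun y => (π1*(ν+x)*w x y) * t^y) := by
      apply (hS0.mul_left (π1*((ν:ℝ)+x))).congr
      intro n; ring
    have P4 : Summable (fun y => (π0*(ν+x)*shiftv (w x) y) * t^y) := by
      apply (hshS0.mul_left (π0*((ν:ℝ)+x))).congr
      intro n; ring
    have T1 : ∑' y, (((x:ℝ)+1) * w (x+1) y) * t^y = ((x:ℝ)+1) * a (x+1) t := by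
      rw [← tsum_mul_left]
      exact tsum_congr (fun y => by ring)
    have T2 : ∑' y, (π2*((x:ℝ)+1)*shiftv (w (x+1)) y) * t^y
        = π2*((x:ℝ)+1)*(t * a (x+1) t) := by
      rw [← hsh1, ← tsum_mul_left]
      exact tsum_congr (fun y => by ring)
    have T3 : ∑' y, (π1*(ν+x)*w x y) * t^y = π1*(ν+x)* a x t := by
      rw [← tsum_mul_left]
      exact tsum_congr (fun y => by ring)
    have T4 : ∑' y, (π0*(ν+x)*shiftv (w x) y) * t^y = π0*(ν+x)*(t * a x t) := by
      rw [← hsh0, ← tsum_mul_left]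
      exact tsum_congr (fun y => by ring)
    have hrec := hrecA t ht0.le ht1 x
    calc ∑' n, c n * t^n
        = ∑' n, (((((x:ℝ)+1) * w (x+1) n) * t^n - (π2*((x:ℝ)+1)*shiftv (w (x+1)) n) * t^n)
            - (π1*(ν+x)*w x n) * t^n - (π0*(ν+x)*shiftv (w x) n) * t^n) :=
          tsum_congr (fun n => by rw [hcdef]; ring)
      _ = ((∑' y, (((x:ℝ)+1) * w (x+1) y) * t^y) - ∑' y, (π2*((x:ℝ)+1)*shiftv (w (x+1)) y) * t^y)
            - (∑' y, (π1*(ν+x)*w x y) * t^y) - ∑' y, (π0*(ν+x)*shiftv (w x) y) * t^y := by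
          rw [Summable.tsum_sub ((P1.sub P2).sub P3) P4, Summable.tsum_sub (P1.sub P2) P3, Summable.tsum_sub P1 P2]
      _ = 0 := by
          rw [T1, T2, T3, T4]
          linear_combination hrec
  have hz := coeff_eq_zero_of_tsum_zero hsummc.abs htsum0 y
  have hz' : ((x:ℝ)+1) * w (x+1) y - π2*((x:ℝ)+1)*shiftv (w (x+1)) y
      - π1*(ν+x)*w x y - π0*(ν+x)*shiftv (w x) y = 0 := hz
  linarith

set_option maxHeartbeats 1000000 in
theorem bnb_pmf_recursion (ν π1 π2 π0 : ℝ) (hν : 0 < ν)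
    (hπ1 : π1 ∈ Set.Ioo (0 : ℝ) 1) (hπ2 : π2 ∈ Set.Ioo (0 : ℝ) 1)
    (hπ0 : π0 ∈ Set.Ioo (-(π1 * π2)) 1) (hb : π0 + π1 + π2 < 1)
    (p : PMF (ℕ × ℕ)) (hp : isBNB ν π1 π2 π0 p)
    (pz : ℤ → ℤ → ℝ)
    (hpz : ∀ x y : ℤ, pz x y =
      if 0 ≤ x ∧ 0 ≤ y then (p (x.toNat, y.toNat)).toReal else 0) :
    ∀ x y : ℕ,
      ((x : ℝ) * pz (x : ℤ) (y : ℤ)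
        = π2 * (x : ℝ) * pz (x : ℤ) ((y : ℤ) - 1)
          + π1 * (ν + (x : ℝ) - 1) * pz ((x : ℤ) - 1) (y : ℤ)
          + π0 * (ν + (x : ℝ) - 1) * pz ((x : ℤ) - 1) ((y : ℤ) - 1))
      ∧ ((y : ℝ) * pz (x : ℤ) (y : ℤ)
        = π1 * (y : ℝ) * pz ((x : ℤ) - 1) (y : ℤ)
          + π2 * (ν + (y : ℝ) - 1) * pz (x : ℤ) ((y : ℤ) - 1)
          + π0 * (ν + (y : ℝ) - 1) * pz ((x : ℤ) - 1) ((y : ℤ) - 1)) := by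
  classical
  set w : ℕ → ℕ → ℝ := fun x y => (p (x, y)).toReal with hwdef
  have hw0 : ∀ x y, 0 ≤ w x y := fun x y => ENNReal.toReal_nonneg
  have hws : Summable (fun q : ℕ × ℕ => w q.1 q.2) := by
    have h1 : ∑' q : ℕ × ℕ, p q ≠ ⊤ := by rw [p.tsum_coe]; exact ENNReal.one_ne_top
    exact (ENNReal.summable_toReal h1).congr (fun q => rfl)
  have hG1 : ∀ s t : ℝ, 0 ≤ s → s < 1 → 0 ≤ t → t < 1 →
      ∑' q : ℕ × ℕ, w q.1 q.2 * s ^ q.1 * t ^ q.2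
        = ((1 - (π0 + π1 + π2)) / (1 - π1*s - π2*t - π0*s*t)) ^ ν := by
    intro s t hs0 hs1 ht0 ht1
    exact hp s t (by rw [abs_of_nonneg hs0]; linarith) (by rw [abs_of_nonneg ht0]; linarith)
  have hG2 : ∀ s t : ℝ, 0 ≤ s → s < 1 → 0 ≤ t → t < 1 →
      ∑' q : ℕ × ℕ, w q.2 q.1 * s ^ q.1 * t ^ q.2
        = ((1 - (π0 + π2 + π1)) / (1 - π2*s - π1*t - π0*s*t)) ^ ν := by
    intro s t hs0 hs1 ht0 ht1
    have e := (Equiv.prodComm ℕ ℕ).tsum_eq (fun q : ℕ × ℕ => (p q).toReal * t ^ q.1 * s ^ q.2)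
    have h1 : ∑' q : ℕ × ℕ, w q.2 q.1 * s ^ q.1 * t ^ q.2
        = ∑' q : ℕ × ℕ, (p q).toReal * t ^ q.1 * s ^ q.2 := by
      rw [← e]
      refine tsum_congr (fun q => ?_)
      obtain ⟨i, j⟩ := q
      show w j i * s ^ i * t ^ j = (p (j, i)).toReal * t ^ j * s ^ i
      rw [hwdef]
      ring
    rw [h1, hp t s (by rw [abs_of_nonneg ht0]; linarith) (by rw [abs_of_nonneg hs0]; linarith),
      show 1 - π1*t - π2*s - π0*t*s = 1 - π2*s - π1*t - π0*s*t from by ring,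
      show π0+π1+π2 = π0+π2+π1 from by ring]
  have Hx := bnb_rec_main hν hπ1.1 hπ1.2 hπ2.1 hπ2.2 hπ0.1 hb w hw0 hws hG1
  have Hy := bnb_rec_main hν hπ2.1 hπ2.2 hπ1.1 hπ1.2
    (by rw [mul_comm]; exact hπ0.1) (by linarith) (fun x y => w y x)
    (fun x y => hw0 y x) hws.prod_symm hG2
  -- translation lemmas
  have e1 : ∀ u v : ℕ, pz (u : ℤ) (v : ℤ) = w u v := by
    intro u v
    rw [hpz]
    simp [hwdef]
  have e2 : ∀ u v : ℕ, pz (u : ℤ) ((v : ℤ) - 1) = shiftv (w u) v := by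
    intro u v
    cases v with
    | zero => rw [hpz]; norm_num [shiftv]
    | succ k =>
      have hcast : ((k+1 : ℕ) : ℤ) - 1 = (k : ℤ) := by push_cast; ring
      rw [hpz, hcast]
      simp [shiftv, hwdef]
  have e4 : ∀ u v : ℕ, pz ((u : ℤ) - 1) (v : ℤ) = shiftv (fun z => w z v) u := by
    intro u v
    cases u with
    | zero => rw [hpz]; norm_num [shiftv]
    | succ k =>
      have hcast : ((k+1 : ℕ) : ℤ) - 1 = (k : ℤ) := by push_cast; ring
      rw [hpz, hcast]
      simp [shiftv, hwdef]
  have e5 : ∀ u v : ℕ, pz ((u : ℤ) - 1) ((v : ℤ) - 1) = 0 ∨ True := fun _ _ => Or.inr trivial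
  have e3 : ∀ u v : ℕ, pz ((u : ℤ) - 1) ((v : ℤ) - 1)
      = shiftv (fun z => shiftv (w z) v) u := by
    intro u v
    cases u with
    | zero => rw [hpz]; norm_num [shiftv]
    | succ k =>
      have hcast : ((k+1 : ℕ) : ℤ) - 1 = (k : ℤ) := by push_cast; ring
      rw [hcast, e2 k v]
      simp [shiftv]
  intro x y
  constructor
  · -- first recursion
    cases x with
    | zero =>
      have hneg : ∀ v : ℤ, pz (((0:ℕ) : ℤ) - 1) v = 0 := by
        intro v; rw [hpz]; norm_num
      rw [hneg, hneg]
      push_cast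
      ring
    | succ X =>
      have hcast : ((X+1 : ℕ) : ℤ) - 1 = ((X : ℕ) : ℤ) := by push_cast; ring
      rw [e1 (X+1) y, e2 (X+1) y, hcast, e1 X y, e2 X y]
      have h := Hx X y
      push_cast
      push_cast at h
      linarith [h]
  · -- second recursion
    cases y with
    | zero =>
      have hneg : ∀ v : ℤ, pz v (((0:ℕ) : ℤ) - 1) = 0 := by
        intro v; rw [hpz]; norm_num
      rw [hneg, hneg]
      push_cast
      ring
    | succ Y =>
      have hcast : ((Y+1 : ℕ) : ℤ) - 1 = ((Y : ℕ) : ℤ) := by push_cast; ring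
      rw [e1 x (Y+1), e4 x (Y+1), hcast, e1 x Y, e4 x Y]
      have h := Hy Y x
      push_cast
      push_cast at h
      linarith [h]
end

section
/- Let λ0, λ > 0 and let (X1, X2) follow the symmetric bivariate Poisson distribution BPoi(λ0; λ, λ). Then for every bounded alternating function f : ℕ × ℕ → ℝ (i.e., f(x, y) = −f(y, x) for all x, y ∈ ℕ), one has E[X1 · f(X1, X2)] = λ · E[f(X1 + 1, X2)] and E[X2 · f(X1, X2)] = λ · E[f(X1, X2 + 1)]. -/
open scoped NNReal ENNReal

/-- The bivariate Poisson distribution `BPoi(λ0; λ1, λ2)`: the distribution of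
`(Z0 + Z1, Z0 + Z2)` where `Z0, Z1, Z2` are independent with `Zi ~ Poisson(λi)`. -/
noncomputable def bpoi (l0 l1 l2 : ℝ≥0) : PMF (ℕ × ℕ) :=
  (ProbabilityTheory.poissonPMF l0).bind fun z0 =>
    (ProbabilityTheory.poissonPMF l1).bind fun z1 =>
      (ProbabilityTheory.poissonPMF l2).map fun z2 => (z0 + z1, z0 + z2)

namespace SteinAux

open ProbabilityTheory MeasureTheory

noncomputable def PP (r : ℝ≥0) (n : ℕ) : ℝ := ((poissonPMF r) n).toReal

lemma PP_eq (r : ℝ≥0) (n : ℕ) : PP r n = poissonPMFReal r n := by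
  rw [PP, poissonPMF]
  show (ENNReal.ofReal (poissonPMFReal r n)).toReal = _
  exact ENNReal.toReal_ofReal poissonPMFReal_nonneg

lemma PP_nonneg (r : ℝ≥0) (n : ℕ) : 0 ≤ PP r n := ENNReal.toReal_nonneg

lemma stein_PP (r : ℝ≥0) (n : ℕ) : ((n : ℝ) + 1) * PP r (n + 1) = r * PP r n := by
  rw [PP_eq, PP_eq]
  unfold poissonPMFReal
  rw [Nat.factorial_succ]
  have h1 : (n.factorial : ℝ) ≠ 0 := Nat.cast_ne_zero.mpr n.factorial_ne_zero
  push_cast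
  field_simp
  ring

lemma summable_PP (r : ℝ≥0) : Summable (PP r) := by
  have := (poissonPMFRealSum r).summable
  exact this.congr fun n => (PP_eq r n).symm

lemma tsum_PP (r : ℝ≥0) : ∑' n, PP r n = 1 := by
  rw [tsum_congr (fun n => PP_eq r n)]
  exact (poissonPMFRealSum r).tsum_eq

lemma summable_nPP (r : ℝ≥0) : Summable (fun n : ℕ => (n : ℝ) * PP r n) := by
  refine (summable_nat_add_iff 1).mp ?_
  refine ((summable_PP r).mul_left (r : ℝ)).congr fun n => ?_
  push_cast
  exact (stein_PP r n).symm

lemma summable_of_abs_le {ι : Type*} {K M : ι → ℝ} (hM : Summable M)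
    (h : ∀ i, |K i| ≤ M i) : Summable K :=
  (hM.of_nonneg_of_le (fun _ => abs_nonneg _) h).of_abs

lemma stein1 (r : ℝ≥0) (u : ℕ → ℝ) (C : ℝ) (hu : ∀ n, |u n| ≤ C) :
    ∑' n, PP r n * ((n : ℝ) * u n) = r * ∑' n, PP r n * u (n + 1) := by
  have hsum : Summable (fun n : ℕ => PP r n * ((n : ℝ) * u n)) := by
    refine summable_of_abs_le (((summable_nPP r).mul_left C)) fun n => ?_
    rw [abs_mul, abs_mul, abs_of_nonneg (PP_nonneg r n), Nat.abs_cast]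
    calc PP r n * ((n : ℝ) * |u n|) ≤ PP r n * ((n : ℝ) * C) :=
          mul_le_mul_of_nonneg_left
            (mul_le_mul_of_nonneg_left (hu n) (Nat.cast_nonneg n)) (PP_nonneg r n)
      _ = C * ((n : ℝ) * PP r n) := by ring
  rw [Summable.tsum_eq_zero_add hsum]
  simp only [Nat.cast_zero, zero_mul, mul_zero, zero_add]
  rw [← tsum_mul_left]
  refine tsum_congr fun n => ?_
  have h2 : PP r (n + 1) * (((n : ℝ) + 1) * u (n + 1))
      = (((n : ℝ) + 1) * PP r (n + 1)) * u (n + 1) := by ring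
  push_cast
  rw [h2, stein_PP r n]
  ring

section PMFbridge

variable {α β : Type*} [MeasurableSpace α] [MeasurableSingletonClass α] [Countable α]
  [MeasurableSpace β] [MeasurableSingletonClass β] [Countable β]

lemma integrable_pmf (p : PMF α) (g : α → ℝ)
    (hs : Summable fun a => (p a).toReal * |g a|) : Integrable g p.toMeasure := by
  refine ⟨(measurable_of_countable g).aestronglyMeasurable, ?_⟩
  rw [HasFiniteIntegral, lintegral_countable']
  have key : ∀ a, ‖g a‖ₑ * p.toMeasure {a}
      = ENNReal.ofReal ((p a).toReal * |g a|) := by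
    intro a
    rw [PMF.toMeasure_apply_singleton p a (measurableSet_singleton a)]
    rw [ENNReal.ofReal_mul ENNReal.toReal_nonneg, ENNReal.ofReal_toReal (p.apply_ne_top a)]
    rw [mul_comm]
    congr 1
    rw [← Real.norm_eq_abs, ofReal_norm]
  rw [tsum_congr key, ← ENNReal.ofReal_tsum_of_nonneg
    (fun a => mul_nonneg ENNReal.toReal_nonneg (abs_nonneg _)) hs]
  exact ENNReal.ofReal_lt_top

lemma integral_pmf (p : PMF α) (g : α → ℝ)
    (hs : Summable fun a => (p a).toReal * |g a|) :
    ∫ a, g a ∂p.toMeasure = ∑' a, (p a).toReal * g a := by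
  simpa [smul_eq_mul] using p.integral_eq_tsum g (integrable_pmf p g hs)

lemma pExp_map (p : PMF α) (h : α → β) (g : β → ℝ)
    (hs : Summable fun a => (p a).toReal * |g (h a)|) :
    ∑' b, ((p.map h) b).toReal * g b = ∑' a, (p a).toReal * g (h a) := by
  have hmeas : Measurable h := measurable_of_countable h
  have hint : Integrable (fun a => g (h a)) p.toMeasure := integrable_pmf p _ hs
  have h2 : Integrable g (p.map h).toMeasure := by
    rw [← PMF.toMeasure_map (f := h) p hmeas]
    exact (integrable_map_measure (measurable_of_countable g).aestronglyMeasurable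
      hmeas.aemeasurable).mpr hint
  calc ∑' b, ((p.map h) b).toReal * g b
      = ∫ b, g b ∂(p.map h).toMeasure := by
        simpa [smul_eq_mul] using ((p.map h).integral_eq_tsum g h2).symm
    _ = ∫ b, g b ∂(p.toMeasure.map h) := by rw [PMF.toMeasure_map (f := h) p hmeas]
    _ = ∫ a, g (h a) ∂p.toMeasure :=
        integral_map hmeas.aemeasurable (measurable_of_countable g).aestronglyMeasurable
    _ = ∑' a, (p a).toReal * g (h a) := integral_pmf p _ hs

end PMFbridge

noncomputable def trip (l0 l : ℝ≥0) : PMF (ℕ × ℕ × ℕ) :=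
  (poissonPMF l0).bind fun a => (poissonPMF l).bind fun b =>
    (poissonPMF l).map fun c => (a, b, c)

def hAdd : ℕ × ℕ × ℕ → ℕ × ℕ := fun z => (z.1 + z.2.1, z.1 + z.2.2)

lemma bpoi_eq (l0 l : ℝ≥0) : bpoi l0 l l = (trip l0 l).map hAdd := by
  simp only [bpoi, trip, PMF.map_bind, PMF.map_comp]
  rfl

lemma trip_apply (l0 l : ℝ≥0) (z : ℕ × ℕ × ℕ) :
    trip l0 l z = poissonPMF l0 z.1 * (poissonPMF l z.2.1 * poissonPMF l z.2.2) := by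
  obtain ⟨a, b, c⟩ := z
  have hmap : ∀ (a' b' : ℕ), ((poissonPMF l).map fun c' => (a', b', c')) (a, b, c)
      = if a = a' ∧ b = b' then poissonPMF l c else 0 := by
    intro a' b'
    rw [PMF.map_apply]
    by_cases h : a = a' ∧ b = b'
    · obtain ⟨rfl, rfl⟩ := h
      simp only [if_pos (And.intro rfl rfl)]
      rw [tsum_eq_single c]
      · simp
      · intro c' hc'
        simp [Prod.ext_iff, Ne.symm hc']
    · rw [if_neg h]
      refine ENNReal.tsum_eq_zero.mpr fun c' => ?_
      rw [if_neg]
      simp only [Prod.ext_iff]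
      tauto
  have hbind : ∀ a' : ℕ, ((poissonPMF l).bind fun b' =>
        (poissonPMF l).map fun c' => (a', b', c')) (a, b, c)
      = if a = a' then poissonPMF l b * poissonPMF l c else 0 := by
    intro a'
    rw [PMF.bind_apply]
    simp_rw [hmap]
    by_cases h : a = a'
    · subst h
      rw [if_pos rfl]
      rw [tsum_eq_single b]
      · simp
      · intro b' hb'
        simp [Ne.symm hb']
    · rw [if_neg h]
      refine ENNReal.tsum_eq_zero.mpr fun b' => ?_
      rw [if_neg (by tauto), mul_zero]
  rw [trip, PMF.bind_apply]
  simp_rw [hbind]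
  rw [tsum_eq_single a]
  · simp [mul_assoc]
  · intro a' ha'
    rw [if_neg (Ne.symm ha'), mul_zero]

lemma pExp_bpoi (l0 l : ℝ≥0) (g : ℕ × ℕ → ℝ)
    (hs : Summable fun z : ℕ × ℕ × ℕ =>
      PP l0 z.1 * PP l z.2.1 * PP l z.2.2 * |g (hAdd z)|) :
    pExp (bpoi l0 l l) g
      = ∑' z : ℕ × ℕ × ℕ, PP l0 z.1 * PP l z.2.1 * PP l z.2.2 * g (hAdd z) := by
  have hW : ∀ z : ℕ × ℕ × ℕ,
      ((trip l0 l) z).toReal = PP l0 z.1 * PP l z.2.1 * PP l z.2.2 := by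
    intro z
    rw [trip_apply]
    simp [PP, ENNReal.toReal_mul, mul_assoc]
  rw [bpoi_eq]
  show (∑' q : ℕ × ℕ, (((trip l0 l).map hAdd) q).toReal * g q) = _
  rw [pExp_map (trip l0 l) hAdd g (hs.congr fun z => by rw [hW z])]
  exact tsum_congr fun z => by rw [hW z]

lemma triple_iter (l0 l : ℝ≥0) (G : ℕ → ℕ → ℕ → ℝ)
    (hs : Summable fun z : ℕ × ℕ × ℕ =>
      PP l0 z.1 * PP l z.2.1 * PP l z.2.2 * G z.1 z.2.1 z.2.2) :
    ∑' z : ℕ × ℕ × ℕ, PP l0 z.1 * PP l z.2.1 * PP l z.2.2 * G z.1 z.2.1 z.2.2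
      = ∑' a, PP l0 a * ∑' b, PP l b * ∑' c, PP l c * G a b c := by
  rw [Summable.tsum_prod' hs hs.prod_factor]
  refine tsum_congr fun a => ?_
  rw [Summable.tsum_prod' (hs.prod_factor a) (hs.prod_factor a).prod_factor]
  calc ∑' (b : ℕ), ∑' (c : ℕ), PP l0 a * PP l b * PP l c * G a b c
      = ∑' (b : ℕ), PP l0 a * (PP l b * ∑' (c : ℕ), PP l c * G a b c) := by
        refine tsum_congr fun b => ?_
        calc ∑' (c : ℕ), PP l0 a * PP l b * PP l c * G a b c
            = ∑' (c : ℕ), (PP l0 a * PP l b) * (PP l c * G a b c) :=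
              tsum_congr fun c => by ring
          _ = (PP l0 a * PP l b) * ∑' (c : ℕ), PP l c * G a b c := tsum_mul_left
          _ = PP l0 a * (PP l b * ∑' (c : ℕ), PP l c * G a b c) := by ring
    _ = PP l0 a * ∑' (b : ℕ), PP l b * ∑' (c : ℕ), PP l c * G a b c := tsum_mul_left

end SteinAux

set_option maxHeartbeats 2000000 in
open SteinAux in
theorem stein_symmetric_bpoi (l0 l : ℝ≥0) (h0 : 0 < l0) (hl : 0 < l)
    (f : ℕ × ℕ → ℝ) (hbdd : ∃ C : ℝ, ∀ q : ℕ × ℕ, |f q| ≤ C)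
    (halt : ∀ x y : ℕ, f (x, y) = -f (y, x)) :
    pExp (bpoi l0 l l) (fun q => (q.1 : ℝ) * f q)
        = l * pExp (bpoi l0 l l) (fun q => f (q.1 + 1, q.2))
      ∧ pExp (bpoi l0 l l) (fun q => (q.2 : ℝ) * f q)
        = l * pExp (bpoi l0 l l) (fun q => f (q.1, q.2 + 1)) := by
  classical
  obtain ⟨C, hC⟩ := hbdd
  have hC0 : 0 ≤ C := (abs_nonneg _).trans (hC (0, 0))
  have hA := summable_PP l0
  have hB := summable_PP l
  have hnA := summable_nPP l0
  have hnB := summable_nPP l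
  have pA : ∀ n, (0:ℝ) ≤ PP l0 n := PP_nonneg l0
  have pB : ∀ n, (0:ℝ) ≤ PP l n := PP_nonneg l
  have pnA : ∀ n : ℕ, (0:ℝ) ≤ (n : ℝ) * PP l0 n :=
    fun n => mul_nonneg (Nat.cast_nonneg n) (pA n)
  have pnB : ∀ n : ℕ, (0:ℝ) ≤ (n : ℝ) * PP l n :=
    fun n => mul_nonneg (Nat.cast_nonneg n) (pB n)
  -- product summabilities
  have hBB : Summable (fun w : ℕ × ℕ => PP l w.1 * PP l w.2) :=
    hB.mul_of_nonneg hB pB pB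
  have hnBB : Summable (fun w : ℕ × ℕ => ((w.1 : ℝ) * PP l w.1) * PP l w.2) :=
    hnB.mul_of_nonneg hB pnB pB
  have hBnB : Summable (fun w : ℕ × ℕ => PP l w.1 * ((w.2 : ℝ) * PP l w.2)) :=
    hB.mul_of_nonneg hnB pB pnB
  have hM0 : Summable (fun z : ℕ × ℕ × ℕ => PP l0 z.1 * (PP l z.2.1 * PP l z.2.2)) :=
    hA.mul_of_nonneg hBB pA (fun w => mul_nonneg (pB w.1) (pB w.2))
  have hMa : Summable (fun z : ℕ × ℕ × ℕ =>
      ((z.1 : ℝ) * PP l0 z.1) * (PP l z.2.1 * PP l z.2.2)) :=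
    hnA.mul_of_nonneg hBB pnA (fun w => mul_nonneg (pB w.1) (pB w.2))
  have hMb : Summable (fun z : ℕ × ℕ × ℕ =>
      PP l0 z.1 * (((z.2.1 : ℝ) * PP l z.2.1) * PP l z.2.2)) :=
    hA.mul_of_nonneg hnBB pA (fun w => mul_nonneg (pnB w.1) (pB w.2))
  have hMc : Summable (fun z : ℕ × ℕ × ℕ =>
      PP l0 z.1 * (PP l z.2.1 * ((z.2.2 : ℝ) * PP l z.2.2))) :=
    hA.mul_of_nonneg hBnB pA (fun w => mul_nonneg (pB w.1) (pnB w.2))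
  have hWnn : ∀ z : ℕ × ℕ × ℕ, 0 ≤ PP l0 z.1 * PP l z.2.1 * PP l z.2.2 :=
    fun z => mul_nonneg (mul_nonneg (pA z.1) (pB z.2.1)) (pB z.2.2)
  have hMa' : Summable (fun z : ℕ × ℕ × ℕ =>
      C * ((z.1 : ℝ) * (PP l0 z.1 * PP l z.2.1 * PP l z.2.2))) :=
    (hMa.mul_left C).congr fun z => by ring
  have hMb' : Summable (fun z : ℕ × ℕ × ℕ =>
      C * ((z.2.1 : ℝ) * (PP l0 z.1 * PP l z.2.1 * PP l z.2.2))) :=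
    (hMb.mul_left C).congr fun z => by ring
  have hMc' : Summable (fun z : ℕ × ℕ × ℕ =>
      C * ((z.2.2 : ℝ) * (PP l0 z.1 * PP l z.2.1 * PP l z.2.2))) :=
    (hMc.mul_left C).congr fun z => by ring
  have hM0' : Summable (fun z : ℕ × ℕ × ℕ =>
      C * (PP l0 z.1 * PP l z.2.1 * PP l z.2.2)) :=
    (hM0.mul_left C).congr fun z => by ring
  have hMab' : Summable (fun z : ℕ × ℕ × ℕ =>
      C * (((z.1 + z.2.1 : ℕ) : ℝ) * (PP l0 z.1 * PP l z.2.1 * PP l z.2.2))) :=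
    ((hMa.add hMb).mul_left C).congr fun z => by push_cast; ring
  have hMac' : Summable (fun z : ℕ × ℕ × ℕ =>
      C * (((z.1 + z.2.2 : ℕ) : ℝ) * (PP l0 z.1 * PP l z.2.1 * PP l z.2.2))) :=
    ((hMa.add hMc).mul_left C).congr fun z => by push_cast; ring
  -- generic bound
  have bound : ∀ (x : ℕ) (w : ℝ) (q : ℕ × ℕ), 0 ≤ w →
      w * |(x : ℝ) * f q| ≤ C * ((x : ℝ) * w) := by
    intro x w q hw
    rw [abs_mul, Nat.abs_cast]
    calc w * ((x : ℝ) * |f q|) ≤ w * ((x : ℝ) * C) :=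
        mul_le_mul_of_nonneg_left
          (mul_le_mul_of_nonneg_left (hC q) (Nat.cast_nonneg x)) hw
      _ = C * ((x : ℝ) * w) := by ring
  have bound0 : ∀ (w : ℝ) (q : ℕ × ℕ), 0 ≤ w → w * |f q| ≤ C * w := by
    intro w q hw
    calc w * |f q| ≤ w * C := mul_le_mul_of_nonneg_left (hC q) hw
      _ = C * w := by ring
  -- summabilities of the integrands
  have sum_af : Summable (fun z : ℕ × ℕ × ℕ =>
      PP l0 z.1 * PP l z.2.1 * PP l z.2.2 * ((z.1 : ℝ) * f (z.1 + z.2.1, z.1 + z.2.2))) := by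
    refine summable_of_abs_le hMa' fun z => ?_
    rw [abs_mul, abs_of_nonneg (hWnn z)]
    exact bound z.1 _ _ (hWnn z)
  have sum_bf : Summable (fun z : ℕ × ℕ × ℕ =>
      PP l0 z.1 * PP l z.2.1 * PP l z.2.2 * ((z.2.1 : ℝ) * f (z.1 + z.2.1, z.1 + z.2.2))) := by
    refine summable_of_abs_le hMb' fun z => ?_
    rw [abs_mul, abs_of_nonneg (hWnn z)]
    exact bound z.2.1 _ _ (hWnn z)
  have sum_cf : Summable (fun z : ℕ × ℕ × ℕ =>
      PP l0 z.1 * PP l z.2.1 * PP l z.2.2 * ((z.2.2 : ℝ) * f (z.1 + z.2.1, z.1 + z.2.2))) := by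
    refine summable_of_abs_le hMc' fun z => ?_
    rw [abs_mul, abs_of_nonneg (hWnn z)]
    exact bound z.2.2 _ _ (hWnn z)
  have sum_sf1 : Summable (fun z : ℕ × ℕ × ℕ =>
      PP l0 z.1 * PP l z.2.1 * PP l z.2.2 * f (z.1 + z.2.1 + 1, z.1 + z.2.2)) := by
    refine summable_of_abs_le hM0' fun z => ?_
    rw [abs_mul, abs_of_nonneg (hWnn z)]
    exact bound0 _ _ (hWnn z)
  have sum_sf2 : Summable (fun z : ℕ × ℕ × ℕ =>
      PP l0 z.1 * PP l z.2.1 * PP l z.2.2 * f (z.1 + z.2.1, z.1 + z.2.2 + 1)) := by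
    refine summable_of_abs_le hM0' fun z => ?_
    rw [abs_mul, abs_of_nonneg (hWnn z)]
    exact bound0 _ _ (hWnn z)
  -- expectations as triple sums
  have E1 : pExp (bpoi l0 l l) (fun q => (q.1 : ℝ) * f q)
      = ∑' z : ℕ × ℕ × ℕ, PP l0 z.1 * PP l z.2.1 * PP l z.2.2 *
        (((z.1 + z.2.1 : ℕ) : ℝ) * f (z.1 + z.2.1, z.1 + z.2.2)) := by
    refine pExp_bpoi l0 l _ ?_
    refine summable_of_abs_le hMab' fun z => ?_
    rw [abs_mul, abs_abs, abs_of_nonneg (hWnn z)]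
    exact bound (z.1 + z.2.1) _ _ (hWnn z)
  have E2 : pExp (bpoi l0 l l) (fun q => (q.2 : ℝ) * f q)
      = ∑' z : ℕ × ℕ × ℕ, PP l0 z.1 * PP l z.2.1 * PP l z.2.2 *
        (((z.1 + z.2.2 : ℕ) : ℝ) * f (z.1 + z.2.1, z.1 + z.2.2)) := by
    refine pExp_bpoi l0 l _ ?_
    refine summable_of_abs_le hMac' fun z => ?_
    rw [abs_mul, abs_abs, abs_of_nonneg (hWnn z)]
    exact bound (z.1 + z.2.2) _ _ (hWnn z)
  have E3 : pExp (bpoi l0 l l) (fun q => f (q.1 + 1, q.2))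
      = ∑' z : ℕ × ℕ × ℕ, PP l0 z.1 * PP l z.2.1 * PP l z.2.2 *
        f (z.1 + z.2.1 + 1, z.1 + z.2.2) := by
    refine pExp_bpoi l0 l _ ?_
    refine summable_of_abs_le hM0' fun z => ?_
    rw [abs_mul, abs_abs, abs_of_nonneg (hWnn z)]
    exact bound0 _ _ (hWnn z)
  have E4 : pExp (bpoi l0 l l) (fun q => f (q.1, q.2 + 1))
      = ∑' z : ℕ × ℕ × ℕ, PP l0 z.1 * PP l z.2.1 * PP l z.2.2 *
        f (z.1 + z.2.1, z.1 + z.2.2 + 1) := by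
    refine pExp_bpoi l0 l _ ?_
    refine summable_of_abs_le hM0' fun z => ?_
    rw [abs_mul, abs_abs, abs_of_nonneg (hWnn z)]
    exact bound0 _ _ (hWnn z)
  -- the alternating double sum vanishes
  have hswD : ∀ x : ℕ, Summable
      (fun w : ℕ × ℕ => PP l w.1 * (PP l w.2 * f (x + w.1, x + w.2))) := by
    intro x
    refine summable_of_abs_le (hBB.mul_left C) fun w => ?_
    rw [abs_mul, abs_mul, abs_of_nonneg (pB w.1), abs_of_nonneg (pB w.2)]
    calc PP l w.1 * (PP l w.2 * |f (x + w.1, x + w.2)|)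
        ≤ PP l w.1 * (PP l w.2 * C) :=
          mul_le_mul_of_nonneg_left
            (mul_le_mul_of_nonneg_left (hC _) (pB w.2)) (pB w.1)
      _ = C * (PP l w.1 * PP l w.2) := by ring
  have hD : ∀ x : ℕ,
      (∑' w : ℕ × ℕ, PP l w.1 * (PP l w.2 * f (x + w.1, x + w.2))) = 0 := by
    intro x
    have key : (∑' w : ℕ × ℕ, PP l w.1 * (PP l w.2 * f (x + w.1, x + w.2)))
        = - ∑' w : ℕ × ℕ, PP l w.1 * (PP l w.2 * f (x + w.1, x + w.2)) := by
      conv_lhs => rw [← (Equiv.prodComm ℕ ℕ).tsum_eq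
        (fun w : ℕ × ℕ => PP l w.1 * (PP l w.2 * f (x + w.1, x + w.2)))]
      rw [← tsum_neg]
      refine tsum_congr fun w => ?_
      simp only [Equiv.prodComm_apply, Prod.fst_swap, Prod.snd_swap]
      rw [halt (x + w.2) (x + w.1)]
      ring
    linarith
  have hDit : ∀ x : ℕ,
      (∑' b, PP l b * ∑' c, PP l c * f (x + b, x + c)) = 0 := by
    intro x
    calc (∑' b, PP l b * ∑' c, PP l c * f (x + b, x + c))
        = ∑' b, ∑' c, PP l b * (PP l c * f (x + b, x + c)) :=
          tsum_congr fun b => tsum_mul_left.symm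
      _ = ∑' w : ℕ × ℕ, PP l w.1 * (PP l w.2 * f (x + w.1, x + w.2)) :=
          (Summable.tsum_prod' (hswD x) (hswD x).prod_factor).symm
      _ = 0 := hD x
  -- the a-term vanishes
  have termA : (∑' z : ℕ × ℕ × ℕ, PP l0 z.1 * PP l z.2.1 * PP l z.2.2 *
      ((z.1 : ℝ) * f (z.1 + z.2.1, z.1 + z.2.2))) = 0 := by
    rw [triple_iter l0 l (fun a b c => (a : ℝ) * f (a + b, a + c)) sum_af]
    rw [show (0 : ℝ) = ∑' _ : ℕ, (0 : ℝ) by rw [tsum_zero]]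
    refine tsum_congr fun a => ?_
    have pullc : ∀ b : ℕ, (∑' c, PP l c * ((a : ℝ) * f (a + b, a + c)))
        = (a : ℝ) * ∑' c, PP l c * f (a + b, a + c) := by
      intro b
      rw [← tsum_mul_left]
      exact tsum_congr fun c => by ring
    calc PP l0 a * ∑' b, PP l b * ∑' c, PP l c * ((a : ℝ) * f (a + b, a + c))
        = PP l0 a * ∑' b, (a : ℝ) * (PP l b * ∑' c, PP l c * f (a + b, a + c)) := by
          congr 1
          exact tsum_congr fun b => by rw [pullc b]; ring
      _ = PP l0 a * ((a : ℝ) *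
            ∑' b, PP l b * ∑' c, PP l c * f (a + b, a + c)) := by rw [tsum_mul_left]
      _ = 0 := by rw [hDit a]; ring
  -- boundedness of the inner conditional expectation
  have hv : ∀ x b : ℕ, |∑' c, PP l c * f (x + b, x + c)| ≤ C := by
    intro x b
    have h1 : ∀ c : ℕ, |PP l c * f (x + b, x + c)| ≤ PP l c * C := by
      intro c
      rw [abs_mul, abs_of_nonneg (pB c)]
      exact mul_le_mul_of_nonneg_left (hC _) (pB c)
    have h2 : Summable (fun c : ℕ => |PP l c * f (x + b, x + c)|) :=
      (hB.mul_right C).of_nonneg_of_le (fun _ => abs_nonneg _) h1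
    calc |∑' c, PP l c * f (x + b, x + c)|
        = ‖∑' c, PP l c * f (x + b, x + c)‖ := (Real.norm_eq_abs _).symm
      _ ≤ ∑' c, ‖PP l c * f (x + b, x + c)‖ := norm_tsum_le_tsum_norm h2
      _ ≤ ∑' c, PP l c * C := Summable.tsum_le_tsum h1 h2 (hB.mul_right C)
      _ = (∑' c, PP l c) * C := tsum_mul_right
      _ = C := by rw [tsum_PP]; ring
  -- part 1
  have part1 : pExp (bpoi l0 l l) (fun q => (q.1 : ℝ) * f q)
      = l * pExp (bpoi l0 l l) (fun q => f (q.1 + 1, q.2)) := by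
    rw [E1, E3]
    have split : (∑' z : ℕ × ℕ × ℕ, PP l0 z.1 * PP l z.2.1 * PP l z.2.2 *
        (((z.1 + z.2.1 : ℕ) : ℝ) * f (z.1 + z.2.1, z.1 + z.2.2)))
        = (∑' z : ℕ × ℕ × ℕ, PP l0 z.1 * PP l z.2.1 * PP l z.2.2 *
            ((z.1 : ℝ) * f (z.1 + z.2.1, z.1 + z.2.2)))
          + ∑' z : ℕ × ℕ × ℕ, PP l0 z.1 * PP l z.2.1 * PP l z.2.2 *
            ((z.2.1 : ℝ) * f (z.1 + z.2.1, z.1 + z.2.2)) := by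
      rw [← Summable.tsum_add sum_af sum_bf]
      exact tsum_congr fun z => by push_cast; ring
    rw [split, termA, zero_add]
    rw [triple_iter l0 l (fun a b c => (b : ℝ) * f (a + b, a + c)) sum_bf]
    rw [triple_iter l0 l (fun a b c => f (a + b + 1, a + c)) sum_sf1]
    rw [← tsum_mul_left (a := (l : ℝ))]
    refine tsum_congr fun a => ?_
    have pullb : ∀ b : ℕ, (∑' c, PP l c * ((b : ℝ) * f (a + b, a + c)))
        = (b : ℝ) * ∑' c, PP l c * f (a + b, a + c) := by
      intro b
      rw [← tsum_mul_left]
      exact tsum_congr fun c => by ring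
    calc PP l0 a * ∑' b, PP l b * ∑' c, PP l c * ((b : ℝ) * f (a + b, a + c))
        = PP l0 a * ∑' b, PP l b *
            ((b : ℝ) * ∑' c, PP l c * f (a + b, a + c)) := by
          congr 1
          exact tsum_congr fun b => by rw [pullb b]
      _ = PP l0 a * ((l : ℝ) * ∑' b, PP l b *
            ∑' c, PP l c * f (a + b + 1, a + c)) := by
          rw [stein1 l (fun b => ∑' c, PP l c * f (a + b, a + c)) C (hv a)]
          simp only [← add_assoc]
      _ = (l : ℝ) * (PP l0 a * ∑' b, PP l b *
            ∑' c, PP l c * f (a + b + 1, a + c)) := by ring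
  -- part 2
  have part2 : pExp (bpoi l0 l l) (fun q => (q.2 : ℝ) * f q)
      = l * pExp (bpoi l0 l l) (fun q => f (q.1, q.2 + 1)) := by
    rw [E2, E4]
    have split : (∑' z : ℕ × ℕ × ℕ, PP l0 z.1 * PP l z.2.1 * PP l z.2.2 *
        (((z.1 + z.2.2 : ℕ) : ℝ) * f (z.1 + z.2.1, z.1 + z.2.2)))
        = (∑' z : ℕ × ℕ × ℕ, PP l0 z.1 * PP l z.2.1 * PP l z.2.2 *
            ((z.1 : ℝ) * f (z.1 + z.2.1, z.1 + z.2.2)))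
          + ∑' z : ℕ × ℕ × ℕ, PP l0 z.1 * PP l z.2.1 * PP l z.2.2 *
            ((z.2.2 : ℝ) * f (z.1 + z.2.1, z.1 + z.2.2)) := by
      rw [← Summable.tsum_add sum_af sum_cf]
      exact tsum_congr fun z => by push_cast; ring
    rw [split, termA, zero_add]
    rw [triple_iter l0 l (fun a b c => (c : ℝ) * f (a + b, a + c)) sum_cf]
    rw [triple_iter l0 l (fun a b c => f (a + b, a + c + 1)) sum_sf2]
    rw [← tsum_mul_left (a := (l : ℝ))]
    refine tsum_congr fun a => ?_
    calc PP l0 a * ∑' b, PP l b * ∑' c, PP l c * ((c : ℝ) * f (a + b, a + c))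
        = PP l0 a * ∑' b, PP l b *
            ((l : ℝ) * ∑' c, PP l c * f (a + b, a + c + 1)) := by
          congr 1
          refine tsum_congr fun b => ?_
          congr 1
          rw [stein1 l (fun c => f (a + b, a + c)) C (fun c => hC _)]
          simp only [← add_assoc]
      _ = PP l0 a * ((l : ℝ) * ∑' b, PP l b *
            ∑' c, PP l c * f (a + b, a + c + 1)) := by
          rw [show (∑' b, PP l b * ((l : ℝ) * ∑' c, PP l c * f (a + b, a + c + 1)))
              = (l : ℝ) * ∑' b, PP l b * ∑' c, PP l c * f (a + b, a + c + 1) from by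
            rw [← tsum_mul_left]
            exact tsum_congr fun b => by ring]
      _ = (l : ℝ) * (PP l0 a * ∑' b, PP l b *
            ∑' c, PP l c * f (a + b, a + c + 1)) := by ring
  exact ⟨part1, part2⟩
end

section
/- Let μ > 0 and ρ ∈ [0, 1) with (1 − ρ)·μ > 0 and ρ·μ > 0, and let (X1, X2) follow the bivariate Poisson distribution BPoi(ρμ; (1 − ρ)μ, (1 − ρ)μ). Then for every bounded function f : ℕ × ℕ → ℝ, one has E[(X1 − X2) · f(X1, X2)] = (1 − ρ)·μ · (E[f(X1 + 1, X2)] − E[f(X1, X2 + 1)]). -/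
open scoped NNReal ENNReal

open MeasureTheory ProbabilityTheory

noncomputable def pW (l : ℝ≥0) (n : ℕ) : ℝ := poissonPMFReal l n

lemma pW_nonneg (l : ℝ≥0) (n : ℕ) : 0 ≤ pW l n := poissonPMFReal_nonneg

lemma pW_eq_toReal (l : ℝ≥0) (n : ℕ) : (poissonPMF l n).toReal = pW l n := by
  rw [show poissonPMF l n = ENNReal.ofReal (poissonPMFReal l n) from rfl,
    ENNReal.toReal_ofReal poissonPMFReal_nonneg]
  rfl

lemma pW_summable (l : ℝ≥0) : Summable (pW l) := (poissonPMFRealSum l).summable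

lemma pW_tsum (l : ℝ≥0) : ∑' n, pW l n = 1 := (poissonPMFRealSum l).tsum_eq

lemma pW_rec (l : ℝ≥0) (n : ℕ) : ((n + 1 : ℕ) : ℝ) * pW l (n + 1) = l * pW l n := by
  have hn : (Nat.factorial n : ℝ) ≠ 0 := Nat.cast_ne_zero.2 (Nat.factorial_ne_zero n)
  simp only [pW, poissonPMFReal, pow_succ, Nat.factorial_succ]
  push_cast
  field_simp

lemma pW_mul_summable (l : ℝ≥0) : Summable (fun n : ℕ => (n : ℝ) * pW l n) := by
  rw [← summable_nat_add_iff 1]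
  have h : (fun n : ℕ => ((n + 1 : ℕ) : ℝ) * pW l (n + 1)) = fun n : ℕ => (l : ℝ) * pW l n := by
    funext n; exact pW_rec l n
  have := (pW_summable l).mul_left (l : ℝ)
  simpa [← h] using this

noncomputable def WW (l0 l1 l2 : ℝ≥0) (z : ℕ × ℕ × ℕ) : ℝ :=
  pW l0 z.1 * pW l1 z.2.1 * pW l2 z.2.2

def T3 : ℕ × ℕ × ℕ → ℕ × ℕ := fun z => (z.1 + z.2.1, z.1 + z.2.2)

lemma WW_nonneg (l0 l1 l2 : ℝ≥0) (z : ℕ × ℕ × ℕ) : 0 ≤ WW l0 l1 l2 z :=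
  mul_nonneg (mul_nonneg (pW_nonneg _ _) (pW_nonneg _ _)) (pW_nonneg _ _)

lemma WW_summable (l0 l1 l2 : ℝ≥0) : Summable (WW l0 l1 l2) := by
  have h12 : Summable (fun y : ℕ × ℕ => pW l1 y.1 * pW l2 y.2) :=
    (pW_summable l1).mul_of_nonneg (pW_summable l2) (fun n => pW_nonneg _ _)
      (fun n => pW_nonneg _ _)
  have h := (pW_summable l0).mul_of_nonneg h12 (fun n => pW_nonneg _ _)
    (fun y => mul_nonneg (pW_nonneg _ _) (pW_nonneg _ _))
  apply h.congr
  intro z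
  simp [WW, mul_assoc]

lemma WW_mul_fst_summable (l0 l1 l2 : ℝ≥0) :
    Summable (fun z : ℕ × ℕ × ℕ => (z.2.1 : ℝ) * WW l0 l1 l2 z) := by
  have h12 : Summable (fun y : ℕ × ℕ => ((y.1 : ℝ) * pW l1 y.1) * pW l2 y.2) :=
    (pW_mul_summable l1).mul_of_nonneg (pW_summable l2)
      (fun n => mul_nonneg (Nat.cast_nonneg n) (pW_nonneg _ _)) (fun n => pW_nonneg _ _)
  have h := (pW_summable l0).mul_of_nonneg h12 (fun n => pW_nonneg _ _)
    (fun y => mul_nonneg (mul_nonneg (Nat.cast_nonneg _) (pW_nonneg _ _)) (pW_nonneg _ _))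
  apply h.congr
  intro z
  simp [WW]; ring

lemma WW_mul_snd_summable (l0 l1 l2 : ℝ≥0) :
    Summable (fun z : ℕ × ℕ × ℕ => (z.2.2 : ℝ) * WW l0 l1 l2 z) := by
  have h12 : Summable (fun y : ℕ × ℕ => pW l1 y.1 * ((y.2 : ℝ) * pW l2 y.2)) :=
    (pW_summable l1).mul_of_nonneg (pW_mul_summable l2)
      (fun n => pW_nonneg _ _) (fun n => mul_nonneg (Nat.cast_nonneg n) (pW_nonneg _ _))
  have h := (pW_summable l0).mul_of_nonneg h12 (fun n => pW_nonneg _ _)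
    (fun y => mul_nonneg (pW_nonneg _ _) (mul_nonneg (Nat.cast_nonneg _) (pW_nonneg _ _)))
  apply h.congr
  intro z
  simp [WW]; ring

lemma shift_mid (l0 l1 l2 : ℝ≥0) (F : ℕ × ℕ × ℕ → ℝ) :
    ∑' z : ℕ × ℕ × ℕ, (z.2.1 : ℝ) * WW l0 l1 l2 z * F z
      = l1 * ∑' z : ℕ × ℕ × ℕ, WW l0 l1 l2 z * F (z.1, z.2.1 + 1, z.2.2) := by
  set g : ℕ × ℕ × ℕ → ℕ × ℕ × ℕ := fun z => (z.1, z.2.1 + 1, z.2.2) with hg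
  have hginj : Function.Injective g := by
    intro a b h
    simp only [hg, Prod.ext_iff] at h ⊢
    exact ⟨h.1, by omega, h.2.2⟩
  have hsupp : Function.support (fun z : ℕ × ℕ × ℕ => (z.2.1 : ℝ) * WW l0 l1 l2 z * F z)
      ⊆ Set.range g := by
    intro z hz
    rcases z with ⟨a, b, c⟩
    rcases b with _ | m
    · simp at hz
    · exact ⟨(a, m, c), rfl⟩
  have key : ∀ z : ℕ × ℕ × ℕ,
      ((z.2.1 + 1 : ℕ) : ℝ) * WW l0 l1 l2 (g z) = (l1 : ℝ) * WW l0 l1 l2 z := by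
    intro z
    have h := pW_rec l1 z.2.1
    simp only [WW, hg]
    push_cast at h ⊢
    linear_combination (pW l0 z.1 * pW l2 z.2.2) * h
  calc ∑' z : ℕ × ℕ × ℕ, (z.2.1 : ℝ) * WW l0 l1 l2 z * F z
      = ∑' z : ℕ × ℕ × ℕ, ((g z).2.1 : ℝ) * WW l0 l1 l2 (g z) * F (g z) :=
        (hginj.tsum_eq hsupp).symm
    _ = ∑' z : ℕ × ℕ × ℕ, (l1 : ℝ) * (WW l0 l1 l2 z * F (z.1, z.2.1 + 1, z.2.2)) := by
        apply tsum_congr; intro z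
        rw [show ((g z).2.1 : ℝ) = ((z.2.1 + 1 : ℕ) : ℝ) from rfl, key z]
        ring
    _ = l1 * ∑' z : ℕ × ℕ × ℕ, WW l0 l1 l2 z * F (z.1, z.2.1 + 1, z.2.2) := tsum_mul_left

lemma shift_last (l0 l1 l2 : ℝ≥0) (F : ℕ × ℕ × ℕ → ℝ) :
    ∑' z : ℕ × ℕ × ℕ, (z.2.2 : ℝ) * WW l0 l1 l2 z * F z
      = l2 * ∑' z : ℕ × ℕ × ℕ, WW l0 l1 l2 z * F (z.1, z.2.1, z.2.2 + 1) := by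
  set g : ℕ × ℕ × ℕ → ℕ × ℕ × ℕ := fun z => (z.1, z.2.1, z.2.2 + 1) with hg
  have hginj : Function.Injective g := by
    intro a b h
    simp only [hg, Prod.ext_iff] at h ⊢
    exact ⟨h.1, h.2.1, by omega⟩
  have hsupp : Function.support (fun z : ℕ × ℕ × ℕ => (z.2.2 : ℝ) * WW l0 l1 l2 z * F z)
      ⊆ Set.range g := by
    intro z hz
    rcases z with ⟨a, b, c⟩
    rcases c with _ | m
    · simp at hz
    · exact ⟨(a, b, m), rfl⟩
  have key : ∀ z : ℕ × ℕ × ℕ,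
      ((z.2.2 + 1 : ℕ) : ℝ) * WW l0 l1 l2 (g z) = (l2 : ℝ) * WW l0 l1 l2 z := by
    intro z
    have h := pW_rec l2 z.2.2
    simp only [WW, hg]
    push_cast at h ⊢
    linear_combination (pW l0 z.1 * pW l1 z.2.1) * h
  calc ∑' z : ℕ × ℕ × ℕ, (z.2.2 : ℝ) * WW l0 l1 l2 z * F z
      = ∑' z : ℕ × ℕ × ℕ, ((g z).2.2 : ℝ) * WW l0 l1 l2 (g z) * F (g z) :=
        (hginj.tsum_eq hsupp).symm
    _ = ∑' z : ℕ × ℕ × ℕ, (l2 : ℝ) * (WW l0 l1 l2 z * F (z.1, z.2.1, z.2.2 + 1)) := by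
        apply tsum_congr; intro z
        rw [show ((g z).2.2 : ℝ) = ((z.2.2 + 1 : ℕ) : ℝ) from rfl, key z]
        ring
    _ = l2 * ∑' z : ℕ × ℕ × ℕ, WW l0 l1 l2 z * F (z.1, z.2.1, z.2.2 + 1) := tsum_mul_left

noncomputable def trip (l0 l1 l2 : ℝ≥0) : PMF (ℕ × ℕ × ℕ) :=
  (poissonPMF l0).bind fun z0 =>
    (poissonPMF l1).bind fun z1 =>
      (poissonPMF l2).map fun z2 => (z0, z1, z2)

lemma bpoi_eq_map (l0 l1 l2 : ℝ≥0) : bpoi l0 l1 l2 = (trip l0 l1 l2).map T3 := by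
  simp only [bpoi, trip, PMF.map_bind, PMF.map_comp]
  rfl

lemma trip_apply (l0 l1 l2 : ℝ≥0) (z : ℕ × ℕ × ℕ) :
    ((trip l0 l1 l2) z).toReal = WW l0 l1 l2 z := by
  obtain ⟨a, b, c⟩ := z
  have h : (trip l0 l1 l2) (a, b, c)
      = poissonPMF l0 a * (poissonPMF l1 b * poissonPMF l2 c) := by
    simp only [trip, PMF.bind_apply, PMF.map_apply]
    rw [tsum_eq_single a (by intro a' ha'; simp [Ne.symm ha'])]
    rw [tsum_eq_single b (by intro b' hb'; simp [Ne.symm hb'])]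
    rw [tsum_eq_single c (by intro c' hc'; simp [Ne.symm hc'])]
    simp
  rw [h, ENNReal.toReal_mul, ENNReal.toReal_mul, pW_eq_toReal, pW_eq_toReal, pW_eq_toReal, WW]
  ring

lemma pmf_integrable {α : Type*} [Countable α] [MeasurableSpace α] [MeasurableSingletonClass α]
    (p : PMF α) (g : α → ℝ) (h : Summable fun a => (p a).toReal * |g a|) :
    Integrable g p.toMeasure := by
  refine ⟨Measurable.of_discrete.aestronglyMeasurable, ?_⟩
  rw [HasFiniteIntegral, lintegral_countable' (fun a => ‖g a‖ₑ)]
  have heq : ∀ a, ‖g a‖ₑ * p.toMeasure {a} = ENNReal.ofReal ((p a).toReal * |g a|) := by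
    intro a
    rw [p.toMeasure_apply_singleton a (measurableSet_singleton a),
      ENNReal.ofReal_mul ENNReal.toReal_nonneg, ENNReal.ofReal_toReal (p.apply_ne_top a),
      ← Real.enorm_eq_ofReal_abs, mul_comm]
  rw [tsum_congr heq, ← ENNReal.ofReal_tsum_of_nonneg
    (fun a => mul_nonneg ENNReal.toReal_nonneg (abs_nonneg _)) h]
  exact ENNReal.ofReal_lt_top

lemma pExp_bpoi (l0 l1 l2 : ℝ≥0) (g : ℕ × ℕ → ℝ)
    (h : Summable fun z : ℕ × ℕ × ℕ => WW l0 l1 l2 z * |g (T3 z)|) :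
    pExp (bpoi l0 l1 l2) g = ∑' z : ℕ × ℕ × ℕ, WW l0 l1 l2 z * g (T3 z) := by
  have hT : Measurable T3 := Measurable.of_discrete
  have hint : Integrable (fun z => g (T3 z)) (trip l0 l1 l2).toMeasure := by
    apply pmf_integrable
    apply h.congr
    intro z
    rw [trip_apply]
  have hmap : (bpoi l0 l1 l2).toMeasure = (trip l0 l1 l2).toMeasure.map T3 := by
    rw [bpoi_eq_map, ← PMF.toMeasure_map T3 (trip l0 l1 l2) hT]
  have hint2 : Integrable g (bpoi l0 l1 l2).toMeasure := by
    rw [hmap]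
    exact (integrable_map_measure Measurable.of_discrete.aestronglyMeasurable
      hT.aemeasurable).2 hint
  calc pExp (bpoi l0 l1 l2) g = ∫ q, g q ∂(bpoi l0 l1 l2).toMeasure := by
        rw [PMF.integral_eq_tsum _ _ hint2]
        simp [pExp, smul_eq_mul]
    _ = ∫ z, g (T3 z) ∂(trip l0 l1 l2).toMeasure := by
        rw [hmap, integral_map hT.aemeasurable Measurable.of_discrete.aestronglyMeasurable]
    _ = ∑' z : ℕ × ℕ × ℕ, WW l0 l1 l2 z * g (T3 z) := by
        rw [PMF.integral_eq_tsum _ _ hint]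
        apply tsum_congr
        intro z
        rw [trip_apply, smul_eq_mul]


set_option maxHeartbeats 1000000 in
theorem stein_inarma_pairs (μ ρ : ℝ≥0) (hμ : 0 < μ) (hρ : ρ < 1)
    (h1 : 0 < (1 - ρ) * μ) (h2 : 0 < ρ * μ)
    (f : ℕ × ℕ → ℝ) (hf : ∃ C : ℝ, ∀ q : ℕ × ℕ, |f q| ≤ C) :
    pExp (bpoi (ρ * μ) ((1 - ρ) * μ) ((1 - ρ) * μ)) (fun q => ((q.1 : ℝ) - (q.2 : ℝ)) * f q)
      = ((1 - ρ : ℝ≥0) : ℝ) * (μ : ℝ)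
          * (pExp (bpoi (ρ * μ) ((1 - ρ) * μ) ((1 - ρ) * μ)) (fun q => f (q.1 + 1, q.2))
            - pExp (bpoi (ρ * μ) ((1 - ρ) * μ) ((1 - ρ) * μ)) (fun q => f (q.1, q.2 + 1))) := by
  obtain ⟨C, hC⟩ := hf
  have hC0 : 0 ≤ C := le_trans (abs_nonneg _) (hC (0, 0))
  set l0 : ℝ≥0 := ρ * μ with hl0
  set l : ℝ≥0 := (1 - ρ) * μ with hl
  have hW := WW_summable l0 l l
  have hW1 := WW_mul_fst_summable l0 l l
  have hW2 := WW_mul_snd_summable l0 l l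
  have hS1 : Summable (fun z : ℕ × ℕ × ℕ => (z.2.1 : ℝ) * WW l0 l l z * f (T3 z)) := by
    apply Summable.of_abs
    apply Summable.of_nonneg_of_le (fun z => abs_nonneg _) ?_ (hW1.mul_right C)
    intro z
    rw [abs_mul, abs_mul, abs_of_nonneg (Nat.cast_nonneg _ : (0:ℝ) ≤ (z.2.1 : ℝ)),
      abs_of_nonneg (WW_nonneg _ _ _ _)]
    exact mul_le_mul_of_nonneg_left (hC _)
      (mul_nonneg (Nat.cast_nonneg _) (WW_nonneg _ _ _ _))
  have hS2 : Summable (fun z : ℕ × ℕ × ℕ => (z.2.2 : ℝ) * WW l0 l l z * f (T3 z)) := by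
    apply Summable.of_abs
    apply Summable.of_nonneg_of_le (fun z => abs_nonneg _) ?_ (hW2.mul_right C)
    intro z
    rw [abs_mul, abs_mul, abs_of_nonneg (Nat.cast_nonneg _ : (0:ℝ) ≤ (z.2.2 : ℝ)),
      abs_of_nonneg (WW_nonneg _ _ _ _)]
    exact mul_le_mul_of_nonneg_left (hC _)
      (mul_nonneg (Nat.cast_nonneg _) (WW_nonneg _ _ _ _))
  have hbdd : ∀ g : ℕ × ℕ → ℝ, (∀ q, |g q| ≤ C) →
      Summable fun z : ℕ × ℕ × ℕ => WW l0 l l z * |g (T3 z)| := by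
    intro g hg
    apply Summable.of_nonneg_of_le
      (fun z => mul_nonneg (WW_nonneg _ _ _ _) (abs_nonneg _)) ?_ (hW.mul_right C)
    intro z
    exact mul_le_mul_of_nonneg_left (hg _) (WW_nonneg _ _ _ _)
  have hSg : Summable fun z : ℕ × ℕ × ℕ =>
      WW l0 l l z * |(((T3 z).1 : ℝ) - ((T3 z).2 : ℝ)) * f (T3 z)| := by
    apply Summable.of_nonneg_of_le
      (fun z => mul_nonneg (WW_nonneg _ _ _ _) (abs_nonneg _)) ?_
      ((hW1.mul_right C).add (hW2.mul_right C))
    intro z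
    have habs : |(((T3 z).1 : ℝ) - ((T3 z).2 : ℝ))| ≤ (z.2.1 : ℝ) + (z.2.2 : ℝ) := by
      simp only [T3]
      push_cast
      calc |((z.1:ℝ) + z.2.1) - ((z.1:ℝ) + z.2.2)| = |(z.2.1:ℝ) - z.2.2| := by ring_nf
        _ ≤ |(z.2.1:ℝ)| + |(z.2.2:ℝ)| := abs_sub _ _
        _ = (z.2.1 : ℝ) + z.2.2 := by
            rw [abs_of_nonneg (Nat.cast_nonneg _), abs_of_nonneg (Nat.cast_nonneg _)]
    calc WW l0 l l z * |(((T3 z).1 : ℝ) - ((T3 z).2 : ℝ)) * f (T3 z)|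
        = WW l0 l l z * (|(((T3 z).1 : ℝ) - ((T3 z).2 : ℝ))| * |f (T3 z)|) := by
          rw [abs_mul]
      _ ≤ WW l0 l l z * (((z.2.1 : ℝ) + (z.2.2 : ℝ)) * C) := by
          apply mul_le_mul_of_nonneg_left _ (WW_nonneg _ _ _ _)
          exact mul_le_mul habs (hC _) (abs_nonneg _)
            (by positivity)
      _ = (z.2.1 : ℝ) * WW l0 l l z * C + (z.2.2 : ℝ) * WW l0 l l z * C := by ring
  rw [pExp_bpoi l0 l l (fun q => ((q.1 : ℝ) - (q.2 : ℝ)) * f q) hSg,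
    pExp_bpoi l0 l l (fun q => f (q.1 + 1, q.2)) (hbdd (fun q => f (q.1 + 1, q.2)) fun q => hC _),
    pExp_bpoi l0 l l (fun q => f (q.1, q.2 + 1)) (hbdd (fun q => f (q.1, q.2 + 1)) fun q => hC _)]
  have hsplit : ∀ z : ℕ × ℕ × ℕ,
      WW l0 l l z * ((((T3 z).1 : ℝ) - ((T3 z).2 : ℝ)) * f (T3 z))
        = (z.2.1 : ℝ) * WW l0 l l z * f (T3 z) - (z.2.2 : ℝ) * WW l0 l l z * f (T3 z) := by
    intro z
    simp only [T3]
    push_cast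
    ring
  rw [tsum_congr hsplit, hS1.tsum_sub hS2]
  rw [shift_mid l0 l l (fun z => f (T3 z)), shift_last l0 l l (fun z => f (T3 z))]
  have hcoe : ((l : ℝ≥0) : ℝ) = ((1 - ρ : ℝ≥0) : ℝ) * (μ : ℝ) := by
    rw [hl]; push_cast; ring
  rw [hcoe]
  have e1 : ∑' z : ℕ × ℕ × ℕ, WW l0 l l z * (fun z => f (T3 z)) (z.1, z.2.1 + 1, z.2.2)
      = ∑' z : ℕ × ℕ × ℕ, WW l0 l l z * f ((T3 z).1 + 1, (T3 z).2) := rfl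
  have e2 : ∑' z : ℕ × ℕ × ℕ, WW l0 l l z * (fun z => f (T3 z)) (z.1, z.2.1, z.2.2 + 1)
      = ∑' z : ℕ × ℕ × ℕ, WW l0 l l z * f ((T3 z).1, (T3 z).2 + 1) := rfl
  rw [e1, e2]
  ring
end
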